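/- arXiv:2310.01759 — 10 statements merged into one kernel-verified Lean document; each statement's English description precedes it below -/
import Mathlib

section
/- Let Γ be the 3-uniform hypergraph on ℝ whose hyperedges are the triples {x,y,z} of pairwise distinct reals satisfying (in some ordering) x - 2y + z = 0, and let A ⊆ ℝ be a subfield. Then the remainder graph Γ_A on ℝ \ A (connecting distinct x, y if there exists z ∈ A with {x,y,z} ∈ Γ) contains no circuits of odd length. -/
/-!
Each edge `{x, y, z}` with `z ∈ A` makes `y` an affine function `y = -(-2)^d x + a` of `x`,
with `d ∈ {-1, 0, 1}` and `a ∈ A`. Composing along a circuit of length `n` gives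
`x₀ = (-1)^n (-2)^e x₀ + a`. For odd `n` the coefficient `-(-2)^e` is never `1`, so
`x₀ ∈ A`, which is impossible since the vertices of the remainder graph lie outside `A`.
-/

/-- The 3-uniform hypergraph on ℝ given (in some ordering) by `x - 2y + z = 0`. -/
def tEdge (x y z : ℝ) : Prop :=
  x ≠ y ∧ x ≠ z ∧ y ≠ z ∧
    (x - 2*y + z = 0 ∨ y - 2*x + z = 0 ∨ x - 2*z + y = 0)

/-- The remainder graph of the hypergraph `tEdge` over a subfield `A`. -/
def tRemAdj (A : Subfield ℝ) (x y : ℝ) : Prop :=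
  x ∉ A ∧ y ∉ A ∧ x ≠ y ∧ ∃ z ∈ A, tEdge x y z

theorem tEdge.exists_eq_neg_neg_two_zpow_mul_add {A : Subfield ℝ} {x y z : ℝ}
    (h : tEdge x y z) (hz : z ∈ A) : ∃ d : ℤ, ∃ a ∈ A, y = -(-2) ^ d * x + a := by
  obtain ⟨-, -, -, hrel | hrel | hrel⟩ := h
  · exact ⟨-1, z / 2, A.div_mem hz (ofNat_mem A 2), by rw [zpow_neg_one]; linarith⟩
  · exact ⟨1, -z, A.neg_mem hz, by rw [zpow_one]; linarith⟩
  · exact ⟨0, 2 * z, A.mul_mem (ofNat_mem A 2) hz, by rw [zpow_zero]; linarith⟩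

theorem exists_eq_neg_one_pow_mul_zpow_mul_add {K : Type*} [Field K] {A : Subfield K}
    {q : K} (hq : q ≠ 0) (hqA : q ∈ A) {x : ℕ → K} {n : ℕ}
    (hstep : ∀ i < n, ∃ d : ℤ, ∃ a ∈ A, x (i + 1) = -q ^ d * x i + a) :
    ∃ e : ℤ, ∃ a ∈ A, x n = (-1) ^ n * q ^ e * x 0 + a := by
  induction n with
  | zero => exact ⟨0, 0, A.zero_mem, by simp⟩
  | succ n ih =>
    obtain ⟨e, a, ha, hxn⟩ := ih fun i hi => hstep i (by omega)
    obtain ⟨d, b, hb, hxn'⟩ := hstep n (by omega)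
    refine ⟨d + e, -q ^ d * a + b,
      A.add_mem (A.mul_mem (A.neg_mem (A.zpow_mem hqA d)) ha) hb, ?_⟩
    rw [hxn', hxn, zpow_add₀ hq]
    ring

theorem Subfield.mem_of_eq_mul_add {K : Type*} [Field K] {A : Subfield K} {x c a : K}
    (hc : c ∈ A) (hc1 : c ≠ 1) (ha : a ∈ A) (hx : x = c * x + a) : x ∈ A := by
  have : x = a / (1 - c) := by
    rw [eq_div_iff (sub_ne_zero.mpr hc1.symm)]
    linear_combination hx
  exact this ▸ A.div_mem ha (A.sub_mem A.one_mem hc)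

theorem neg_zpow_ne_neg_one {K : Type*} [Field K] [LinearOrder K] [IsStrictOrderedRing K]
    {q : K} (hq : 0 < q) (hq1 : q ≠ 1) (e : ℤ) : (-q) ^ e ≠ -1 := by
  rcases e.even_or_odd with he | he
  · rw [he.neg_zpow]
    linarith [zpow_pos hq e]
  · rw [he.neg_zpow, Ne, neg_inj, zpow_eq_one_iff_right₀ hq.le hq1]
    rintro rfl
    exact Int.not_odd_zero he

/-- The remainder graph of the hypergraph `x - 2y + z = 0` over a subfield contains
no circuits of odd length. -/
theorem stmt0 (A : Subfield ℝ) (n : ℕ) (x : ℕ → ℝ)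
    (hcirc : ∀ i < n, tRemAdj A (x i) (x (i+1))) (hclose : x n = x 0) :
    ¬ Odd n := by
  intro hn
  have h2 : (-2 : ℝ) ∈ A := A.neg_mem (ofNat_mem A 2)
  obtain ⟨e, a, ha, hx⟩ := exists_eq_neg_one_pow_mul_zpow_mul_add (by norm_num) h2
    (x := x) fun i hi => by
      obtain ⟨-, -, -, z, hz, hedge⟩ := hcirc i hi
      exact hedge.exists_eq_neg_neg_two_zpow_mul_add hz
  rw [hclose, hn.neg_one_pow, neg_one_mul] at hx
  have hcoeff : -(-2 : ℝ) ^ e ≠ 1 := fun h =>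
    neg_zpow_ne_neg_one (by norm_num) (by norm_num) e (neg_eq_iff_eq_neg.mp h)
  exact (hcirc 0 hn.pos).1 <|
    A.mem_of_eq_mul_add (A.neg_mem (A.zpow_mem h2 e)) hcoeff ha hx
end

section
/- Let Γ be the hypergraph of equilateral triangles in ℝ³ (triples of points forming an equilateral triangle). Let F ⊊ ℝ be a real closed subfield and A = F³. Then the remainder graph Γ_A on ℝ³ \ A contains a triangle (three pairwise adjacent vertices). -/
/-- A subfield of ℝ is real closed if every nonnegative element has a square root in it
and every polynomial of odd degree with coefficients in it has a root in it. -/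
def IsRealClosedSubfield (F : Subfield ℝ) : Prop :=
  (∀ x : ℝ, x ∈ F → 0 ≤ x → ∃ y ∈ F, y ^ 2 = x) ∧
  ∀ p : Polynomial ℝ, (∀ n, p.coeff n ∈ F) → Odd p.natDegree →
    ∃ x ∈ F, Polynomial.eval x p = 0

/-- The hypergraph of equilateral triangles in ℝ³. -/
def eqEdge (x y z : EuclideanSpace ℝ (Fin 3)) : Prop :=
  x ≠ y ∧ x ≠ z ∧ y ≠ z ∧ dist x y = dist y z ∧ dist y z = dist x z

/-- The remainder graph of the equilateral-triangle hypergraph over `A`. -/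
def eqRemAdj (A : Set (EuclideanSpace ℝ (Fin 3))) (x y : EuclideanSpace ℝ (Fin 3)) : Prop :=
  x ∉ A ∧ y ∉ A ∧ x ≠ y ∧ ∃ z ∈ A, eqEdge x y z

/-!
Pick `a ∉ F` (so `a ≠ 0`). The points `(a,a,0)`, `(a,0,a)`, `(0,a,a)` together with the
origin form a regular tetrahedron of side `√2 |a|`. The origin lies in `F³`, while each of the
other three vertices has a coordinate `a` and so lies outside `F³`; any two of them span an
equilateral triangle with the origin, so they are pairwise adjacent in the remainder graph.
-/

section Tetrahedron

variable {x y z w : EuclideanSpace ℝ (Fin 3)} {r : ℝ}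

lemma eqEdge_of_dist_eq (hr : 0 < r) (hxy : dist x y = r) (hyz : dist y z = r)
    (hxz : dist x z = r) : eqEdge x y z := by
  refine ⟨?_, ?_, ?_, hxy.trans hyz.symm, hyz.trans hxz.symm⟩ <;>
    exact dist_pos.mp (by linarith)

lemma eqRemAdj_of_dist_eq {A : Set (EuclideanSpace ℝ (Fin 3))} (hr : 0 < r) (hx : x ∉ A)
    (hy : y ∉ A) (hz : z ∈ A) (hxy : dist x y = r) (hyz : dist y z = r) (hxz : dist x z = r) :
    eqRemAdj A x y :=
  ⟨hx, hy, dist_pos.mp (hxy ▸ hr), z, hz, eqEdge_of_dist_eq hr hxy hyz hxz⟩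

end Tetrahedron

lemma dist_vec_three (p₀ p₁ p₂ q₀ q₁ q₂ : ℝ) :
    dist !₂[p₀, p₁, p₂] !₂[q₀, q₁, q₂] =
      √((p₀ - q₀) ^ 2 + (p₁ - q₁) ^ 2 + (p₂ - q₂) ^ 2) := by
  simp [EuclideanSpace.dist_eq, Fin.sum_univ_three, Real.dist_eq, sq_abs, add_assoc]

theorem stmt2_general (F : Subfield ℝ)
    (hne : (F : Set ℝ) ≠ Set.univ) :
    ∃ x y z : EuclideanSpace ℝ (Fin 3),
      eqRemAdj {p | ∀ i, p i ∈ F} x y ∧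
      eqRemAdj {p | ∀ i, p i ∈ F} y z ∧
      eqRemAdj {p | ∀ i, p i ∈ F} x z := by
  obtain ⟨a, ha⟩ := (Set.ne_univ_iff_exists_notMem _).mp hne
  have ha₀ : a ≠ 0 := by rintro rfl; exact ha F.zero_mem
  have hr : 0 < √(2 * a ^ 2) := by positivity
  have hO : !₂[0, 0, 0] ∈ {p : EuclideanSpace ℝ (Fin 3) | ∀ i, p i ∈ F} := by
    intro i; fin_cases i <;> exact F.zero_mem
  have hX : !₂[a, a, 0] ∉ {p : EuclideanSpace ℝ (Fin 3) | ∀ i, p i ∈ F} := fun h => ha (h 0)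
  have hY : !₂[a, 0, a] ∉ {p : EuclideanSpace ℝ (Fin 3) | ∀ i, p i ∈ F} := fun h => ha (h 0)
  have hZ : !₂[0, a, a] ∉ {p : EuclideanSpace ℝ (Fin 3) | ∀ i, p i ∈ F} := fun h => ha (h 1)
  refine ⟨_, _, _, eqRemAdj_of_dist_eq hr hX hY hO ?_ ?_ ?_,
    eqRemAdj_of_dist_eq hr hY hZ hO ?_ ?_ ?_, eqRemAdj_of_dist_eq hr hX hZ hO ?_ ?_ ?_⟩ <;>
  · rw [dist_vec_three]; ring_nf

/-- If `F ⊊ ℝ` is a real closed subfield and `A = F³`, then the remainder graph of the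
equilateral-triangle hypergraph on `ℝ³ \ A` contains a triangle. -/
theorem stmt2 (F : Subfield ℝ) (hF : IsRealClosedSubfield F)
    (hne : (F : Set ℝ) ≠ Set.univ) :
    ∃ x y z : EuclideanSpace ℝ (Fin 3),
      eqRemAdj {p | ∀ i, p i ∈ F} x y ∧
      eqRemAdj {p | ∀ i, p i ∈ F} y z ∧
      eqRemAdj {p | ∀ i, p i ∈ F} x z :=
  stmt2_general F hne
end

section
/- Let Γ be the hypergraph of isosceles triangles in ℝ² (triples of pairwise distinct points forming an isosceles triangle). Let F ⊊ ℝ be a real closed subfield and A = F². Then the remainder graph Γ_A on ℝ² \ A contains a clique of cardinality continuum. Specifically, for any ε > 0 with ε ∉ F and any z ∈ A, the circle of radius ε centered at z is disjoint from A and is a clique in Γ_A. -/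
/-- The hypergraph of isosceles triangles in ℝ²: triples of pairwise distinct points
with at least two of the three pairwise distances equal. -/
def isoEdge (x y z : EuclideanSpace ℝ (Fin 2)) : Prop :=
  x ≠ y ∧ x ≠ z ∧ y ≠ z ∧
    (dist x y = dist x z ∨ dist x y = dist y z ∨ dist x z = dist y z)

/-- The remainder graph of the isosceles-triangle hypergraph over `A`. -/
def isoRemAdj (A : Set (EuclideanSpace ℝ (Fin 2))) (x y : EuclideanSpace ℝ (Fin 2)) : Prop :=
  x ∉ A ∧ y ∉ A ∧ x ≠ y ∧ ∃ z ∈ A, isoEdge x y z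


/-!
Distances from a point of `F²` to another point of `F²` have squares in `F`; since `F` is closed
under square roots of its nonnegative elements, a circle whose radius `ε` lies outside `F` misses
`F²` entirely, while any two of its points form an isosceles triangle with its centre.
-/

open Cardinal Metric

lemma Subfield.mem_of_sq_mem {F : Subfield ℝ}
    (hsqrt : ∀ x : ℝ, x ∈ F → 0 ≤ x → ∃ y ∈ F, y ^ 2 = x)
    {a : ℝ} (ha : a ^ 2 ∈ F) : a ∈ F := by
  obtain ⟨y, hyF, hy⟩ := hsqrt _ ha (sq_nonneg a)
  rcases sq_eq_sq_iff_eq_or_eq_neg.mp hy with rfl | rfl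
  · exact hyF
  · simpa using F.neg_mem hyF

lemma EuclideanSpace.dist_sq_mem_subfield {ι : Type*} [Fintype ι] (F : Subfield ℝ)
    {x z : EuclideanSpace ℝ ι} (hx : ∀ i, x i ∈ F) (hz : ∀ i, z i ∈ F) : dist x z ^ 2 ∈ F := by
  rw [EuclideanSpace.dist_sq_eq]
  refine F.sum_mem fun i _ => ?_
  rw [Real.dist_eq, sq_abs]
  exact F.pow_mem (F.sub_mem (hx i) (hz i)) 2

lemma EuclideanSpace.disjoint_sphere_of_radius_notMem {ι : Type*} [Fintype ι] {F : Subfield ℝ}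
    (hsqrt : ∀ x : ℝ, x ∈ F → 0 ≤ x → ∃ y ∈ F, y ^ 2 = x) {ε : ℝ} (hεF : ε ∉ F)
    {z : EuclideanSpace ℝ ι} (hz : ∀ i, z i ∈ F) :
    Disjoint (sphere z ε) {p : EuclideanSpace ℝ ι | ∀ i, p i ∈ F} := by
  refine Set.disjoint_left.mpr fun x hx hxF => hεF (Subfield.mem_of_sq_mem hsqrt ?_)
  rw [← mem_sphere.mp hx]
  exact EuclideanSpace.dist_sq_mem_subfield F hxF hz

lemma isoRemAdj_of_mem_sphere {A : Set (EuclideanSpace ℝ (Fin 2))}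
    {z x y : EuclideanSpace ℝ (Fin 2)} {ε : ℝ} (hz : z ∈ A) (hε : ε ≠ 0)
    (hx : x ∈ sphere z ε) (hy : y ∈ sphere z ε) (hxy : x ≠ y)
    (hxA : x ∉ A) (hyA : y ∉ A) : isoRemAdj A x y :=
  ⟨hxA, hyA, hxy, z, hz, hxy, ne_of_mem_sphere hx hε, ne_of_mem_sphere hy hε,
    Or.inr (Or.inr ((mem_sphere.mp hx).trans (mem_sphere.mp hy).symm))⟩

lemma Cardinal.mk_euclideanSpace_real {ι : Type*} [Fintype ι] [Nonempty ι] :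
    #(EuclideanSpace ℝ ι) = 𝔠 := by
  rw [(WithLp.equiv 2 (ι → ℝ)).cardinal_eq, mk_arrow, mk_real, lift_continuum, mk_fintype,
    lift_natCast, power_natCast, power_nat_eq aleph0_le_continuum Fintype.card_pos]

lemma Cardinal.mk_sphere_euclideanSpace_fin_two (z : EuclideanSpace ℝ (Fin 2)) {ε : ℝ}
    (hε : 0 < ε) : #(sphere z ε) = 𝔠 := by
  refine le_antisymm (mk_euclideanSpace_real (ι := Fin 2) ▸ mk_set_le _) ?_
  let upper (a : Set.Icc (-ε) ε) : EuclideanSpace ℝ (Fin 2) :=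
    z + !₂[(a : ℝ), √(ε ^ 2 - (a : ℝ) ^ 2)]
  have upper_mem (a : Set.Icc (-ε) ε) : upper a ∈ sphere z ε := by
    have hsq : 0 ≤ ε ^ 2 - (a : ℝ) ^ 2 := sub_nonneg.mpr (sq_le_sq' a.2.1 a.2.2)
    rw [mem_sphere, dist_eq_norm, ← sq_eq_sq₀ (norm_nonneg _) hε.le,
      EuclideanSpace.real_norm_sq_eq]
    simp [upper, Fin.sum_univ_two, Real.sq_sqrt hsq]
  have upper_injective : Function.Injective fun a => (⟨upper a, upper_mem a⟩ : sphere z ε) := by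
    intro a b hab
    have h0 := congrArg (fun p : sphere z ε => (p : EuclideanSpace ℝ (Fin 2)) 0) hab
    exact Subtype.ext (by simpa [upper] using h0)
  exact mk_Icc_real (show -ε < ε by linarith) ▸ mk_le_of_injective upper_injective

theorem stmt3_general (F : Subfield ℝ) (hF : IsRealClosedSubfield F)
    (ε : ℝ) (hε : 0 < ε) (hεF : ε ∉ F)
    (z : EuclideanSpace ℝ (Fin 2)) (hz : z ∈ {p : EuclideanSpace ℝ (Fin 2) | ∀ i, p i ∈ F}) :
    (Metric.sphere z ε ∩ {p : EuclideanSpace ℝ (Fin 2) | ∀ i, p i ∈ F} = ∅) ∧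
    (∀ x ∈ Metric.sphere z ε, ∀ y ∈ Metric.sphere z ε, x ≠ y →
      isoRemAdj {p | ∀ i, p i ∈ F} x y) ∧
    Cardinal.mk (Metric.sphere z ε) = Cardinal.continuum := by
  have hdisj := EuclideanSpace.disjoint_sphere_of_radius_notMem hF.1 hεF hz
  refine ⟨Set.disjoint_iff_inter_eq_empty.mp hdisj, fun x hx y hy hxy => ?_,
    mk_sphere_euclideanSpace_fin_two z hε⟩
  exact isoRemAdj_of_mem_sphere hz hε.ne' hx hy hxy (Set.disjoint_left.mp hdisj hx)
    (Set.disjoint_left.mp hdisj hy)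

/-- If `F ⊊ ℝ` is a real closed subfield and `A = F²`, then the remainder graph of the
isosceles-triangle hypergraph contains a clique of size continuum: for any `ε > 0` with
`ε ∉ F` and any `z ∈ A`, the sphere of radius `ε` around `z` is disjoint from `A`,
is a clique in the remainder graph, and has cardinality continuum. -/
theorem stmt3 (F : Subfield ℝ) (hF : IsRealClosedSubfield F)
    (hne : (F : Set ℝ) ≠ Set.univ)
    (ε : ℝ) (hε : 0 < ε) (hεF : ε ∉ F)
    (z : EuclideanSpace ℝ (Fin 2)) (hz : z ∈ {p : EuclideanSpace ℝ (Fin 2) | ∀ i, p i ∈ F}) :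
    (Metric.sphere z ε ∩ {p : EuclideanSpace ℝ (Fin 2) | ∀ i, p i ∈ F} = ∅) ∧
    (∀ x ∈ Metric.sphere z ε, ∀ y ∈ Metric.sphere z ε, x ≠ y →
      isoRemAdj {p | ∀ i, p i ∈ F} x y) ∧
    Cardinal.mk (Metric.sphere z ε) = Cardinal.continuum :=
  stmt3_general F hF ε hε hεF z hz
end

section
/- Let X be an abelian group, let Γ = ⋃_{i<n} Γ_i be a finite union of slim linear hypergraphs of arity three on X generated by injective homomorphisms g_j^i (j < 3), and let A ⊆ X be a Γ-closed subgroup. Then the map sending x ∈ X \ A to its coset modulo A is a graph homomorphism from the remainder graph Γ_A to a locally finite graph on the set of nontrivial cosets; for countable unions the target graph is locally countable. -/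
variable {X : Type*} [AddCommGroup X]

/-- The hyperedges of the slim linear hypergraph generated by `g 0, g 1, g 2`:
pairwise distinct triples satisfying `g 0 x₀ + g 1 x₁ + g 2 x₂ = 0` in some ordering. -/
def SlimEdge (g : Fin 3 → X →+ X) (x₀ x₁ x₂ : X) : Prop :=
  x₀ ≠ x₁ ∧ x₀ ≠ x₂ ∧ x₁ ≠ x₂ ∧
    ∃ σ : Equiv.Perm (Fin 3),
      g 0 (![x₀, x₁, x₂] (σ 0)) + g 1 (![x₀, x₁, x₂] (σ 1)) + g 2 (![x₀, x₁, x₂] (σ 2)) = 0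

/-- The triple of homomorphisms generates a slim linear hypergraph: all of them and
their pairwise sums are injective. -/
def IsSlim (g : Fin 3 → X →+ X) : Prop :=
  (∀ j, Function.Injective (g j)) ∧
  ∀ j k : Fin 3, j ≠ k → Function.Injective fun x => g j x + g k x

/-- Hyperedge of a union of slim linear hypergraphs. -/
def GEdge {ι : Type*} (g : ι → Fin 3 → X →+ X) (x₀ x₁ x₂ : X) : Prop :=
  ∃ i, SlimEdge (g i) x₀ x₁ x₂

/-- `A` is Γ-closed for the union Γ of the slim hypergraphs generated by `g i`:
a subgroup closed under the generating homomorphisms, their inverses, and the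
inverses of their pairwise sums. -/
def GammaClosed {ι : Type*} (g : ι → Fin 3 → X →+ X) (A : Set X) : Prop :=
  (0 : X) ∈ A ∧ (∀ x ∈ A, ∀ y ∈ A, x - y ∈ A) ∧
  (∀ i j, ∀ x ∈ A, g i j x ∈ A) ∧
  (∀ i j, ∀ x : X, g i j x ∈ A → x ∈ A) ∧
  (∀ i, ∀ j k : Fin 3, j ≠ k → ∀ x : X, g i j x + g i k x ∈ A → x ∈ A)

/-- The remainder graph of the union hypergraph over `A`: distinct points outside `A`
connected if some `z ∈ A` completes them to a hyperedge. -/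
def RemAdj {ι : Type*} (g : ι → Fin 3 → X →+ X) (A : Set X) (x y : X) : Prop :=
  x ∉ A ∧ y ∉ A ∧ x ≠ y ∧ ∃ i, ∃ z ∈ A, SlimEdge (g i) x y z

/-- The adjacency of the quotient graph Θ on cosets of `A`. -/
def ThetaAdj {ι : Type*} (g : ι → Fin 3 → X →+ X) (A : AddSubgroup X)
    (c d : X ⧸ A) : Prop :=
  c ≠ d ∧ ∃ x y : X, (QuotientAddGroup.mk x : X ⧸ A) = c ∧
    (QuotientAddGroup.mk y : X ⧸ A) = d ∧ RemAdj g (A : Set X) x y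

/-!
Rearranging a hyperedge `{x, y, z}` with `z ∈ A` gives `g a x + g b y ∈ A` for two distinct
indices `a ≠ b` of one hypergraph `Γ_i`. If `x` and `y` lay in the same coset, this would give
`g a x + g b x ∈ A` and hence `x ∈ A`; so adjacent points lie in distinct cosets. For fixed
`(i, a, b)` the coset of `y` is determined by that of `x`, because `g b` reflects membership
in `A`. Hence a coset has at most one neighbour per triple `(i, a, b)`.
-/

theorem SlimEdge.exists_add_add_eq_zero {g : Fin 3 → X →+ X} {x y z : X}
    (h : SlimEdge g x y z) : ∃ a b c : Fin 3, a ≠ b ∧ g a x + g b y + g c z = 0 := by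
  obtain ⟨-, -, -, σ, hσ⟩ := h
  refine ⟨σ⁻¹ 0, σ⁻¹ 1, σ⁻¹ 2, σ⁻¹.injective.ne (by decide), ?_⟩
  calc g (σ⁻¹ 0) x + g (σ⁻¹ 1) y + g (σ⁻¹ 2) z = ∑ j, g (σ⁻¹ j) (![x, y, z] j) := by
        simp [Fin.sum_univ_three]
    _ = ∑ j, g j (![x, y, z] (σ j)) := by rw [← Equiv.sum_comp σ]; simp
    _ = 0 := by rw [Fin.sum_univ_three, hσ]

namespace GammaClosed

variable {ι : Type*} {g : ι → Fin 3 → X →+ X} {A : AddSubgroup X}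

theorem exists_add_mem_of_slimEdge (hA : GammaClosed g (A : Set X)) {i : ι} {x y z : X}
    (hz : z ∈ A) (h : SlimEdge (g i) x y z) : ∃ a b : Fin 3, a ≠ b ∧ g i a x + g i b y ∈ A := by
  obtain ⟨a, b, c, hab, habc⟩ := h.exists_add_add_eq_zero
  refine ⟨a, b, hab, ?_⟩
  rw [eq_neg_of_add_eq_zero_left habc]
  exact A.neg_mem (hA.2.2.1 i c z hz)

theorem mk_ne_of_add_mem (hA : GammaClosed g (A : Set X)) {i : ι} {a b : Fin 3} (hab : a ≠ b)
    {x y : X} (hx : x ∉ A) (hxy : g i a x + g i b y ∈ A) :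
    (QuotientAddGroup.mk x : X ⧸ A) ≠ QuotientAddGroup.mk y := by
  intro h
  have hyx : g i b (y - x) ∈ A := hA.2.2.1 i b _ (QuotientAddGroup.eq_iff_sub_mem.mp h.symm)
  have hxx : g i a x + g i b x ∈ A := by
    have : g i a x + g i b x = (g i a x + g i b y) - g i b (y - x) := by
      rw [map_sub]; abel
    exact this ▸ A.sub_mem hxy hyx
  exact hx (hA.2.2.2.2 i a b hab x hxx)

theorem mk_eq_of_add_mem (hA : GammaClosed g (A : Set X)) {i : ι} {a b : Fin 3} {x x' y y' : X}
    (hx : (QuotientAddGroup.mk x : X ⧸ A) = QuotientAddGroup.mk x')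
    (hxy : g i a x + g i b y ∈ A) (hxy' : g i a x' + g i b y' ∈ A) :
    (QuotientAddGroup.mk y : X ⧸ A) = QuotientAddGroup.mk y' := by
  have hax : g i a (x - x') ∈ A := hA.2.2.1 i a _ (QuotientAddGroup.eq_iff_sub_mem.mp hx)
  have hby : g i b (y - y') ∈ A := by
    have : g i b (y - y') = (g i a x + g i b y) - (g i a x' + g i b y') - g i a (x - x') := by
      simp only [map_sub]; abel
    exact this ▸ A.sub_mem (A.sub_mem hxy hxy') hax
  exact QuotientAddGroup.eq_iff_sub_mem.mpr (hA.2.2.2.1 i b _ hby)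

end GammaClosed

section Quotient

variable {ι : Type*} (g : ι → Fin 3 → X →+ X) (A : AddSubgroup X)

def linkedCosets (i : ι) (a b : Fin 3) (c : X ⧸ A) : Set (X ⧸ A) :=
  {d | ∃ x y : X, (QuotientAddGroup.mk x : X ⧸ A) = c ∧ (QuotientAddGroup.mk y : X ⧸ A) = d ∧
    g i a x + g i b y ∈ A}

variable {g A}

theorem subsingleton_linkedCosets (hA : GammaClosed g (A : Set X)) (i : ι) (a b : Fin 3)
    (c : X ⧸ A) : (linkedCosets g A i a b c).Subsingleton := by
  rintro _ ⟨x, y, rfl, rfl, hxy⟩ _ ⟨x', y', hx, rfl, hxy'⟩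
  exact hA.mk_eq_of_add_mem hx.symm hxy hxy'

theorem thetaAdj_subset_iUnion_linkedCosets (hA : GammaClosed g (A : Set X)) (c : X ⧸ A) :
    {d | ThetaAdj g A c d} ⊆ ⋃ p : ι × Fin 3 × Fin 3, linkedCosets g A p.1 p.2.1 p.2.2 c := by
  rintro d ⟨-, x, y, hxc, hyd, -, -, -, i, z, hz, hedge⟩
  obtain ⟨a, b, -, hxy⟩ := hA.exists_add_mem_of_slimEdge hz hedge
  exact Set.mem_iUnion.mpr ⟨(i, a, b), x, y, hxc, hyd, hxy⟩

theorem RemAdj.thetaAdj_mk (hA : GammaClosed g (A : Set X)) {x y : X}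
    (h : RemAdj g (A : Set X) x y) :
    ThetaAdj g A (QuotientAddGroup.mk x) (QuotientAddGroup.mk y) := by
  obtain ⟨i, z, hz, hedge⟩ := h.2.2.2
  obtain ⟨a, b, hab, hxy⟩ := hA.exists_add_mem_of_slimEdge hz hedge
  exact ⟨hA.mk_ne_of_add_mem hab h.1 hxy, x, y, rfl, rfl, h⟩

end Quotient

theorem stmt4_general {ι : Type*} [Countable ι] (g : ι → Fin 3 → X →+ X)
    (A : AddSubgroup X) (hA : GammaClosed g (A : Set X)) :
    (∀ x y : X, RemAdj g (A : Set X) x y →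
      (QuotientAddGroup.mk x : X ⧸ A) ≠ QuotientAddGroup.mk y ∧
      ThetaAdj g A (QuotientAddGroup.mk x) (QuotientAddGroup.mk y)) ∧
    (∀ c : X ⧸ A, {d | ThetaAdj g A c d}.Countable) ∧
    (Finite ι → ∀ c : X ⧸ A, {d | ThetaAdj g A c d}.Finite) := by
  refine ⟨fun x y h => ⟨(h.thetaAdj_mk hA).1, h.thetaAdj_mk hA⟩, fun c => ?_, fun _ c => ?_⟩
  · exact (Set.countable_iUnion fun p => (subsingleton_linkedCosets hA _ _ _ c).countable).mono
      (thetaAdj_subset_iUnion_linkedCosets hA c)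
  · exact (Set.finite_iUnion fun p => (subsingleton_linkedCosets hA _ _ _ c).finite).subset
      (thetaAdj_subset_iUnion_linkedCosets hA c)

/-- For a countable (resp. finite) union Γ of slim linear hypergraphs and a Γ-closed
subgroup `A`, the quotient map is a graph homomorphism from the remainder graph `Γ_A`
to the quotient graph on cosets, which is locally countable (resp. locally finite). -/
theorem stmt4 {ι : Type*} [Countable ι] (g : ι → Fin 3 → X →+ X)
    (hg : ∀ i, IsSlim (g i)) (A : AddSubgroup X) (hA : GammaClosed g (A : Set X)) :
    (∀ x y : X, RemAdj g (A : Set X) x y →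
      (QuotientAddGroup.mk x : X ⧸ A) ≠ QuotientAddGroup.mk y ∧
      ThetaAdj g A (QuotientAddGroup.mk x) (QuotientAddGroup.mk y)) ∧
    (∀ c : X ⧸ A, {d | ThetaAdj g A c d}.Countable) ∧
    (Finite ι → ∀ c : X ⧸ A, {d | ThetaAdj g A c d}.Finite) :=
  stmt4_general g A hA
end

section
/- Let X be an abelian group, Γ a 3-uniform hypergraph on X that is a countable union of slim linear hypergraphs, and A ⊆ X a countable Γ-closed set. Then the chromatic number of the remainder graph Γ_A is countable, i.e., there is a function c : (X \ A) → ℕ such that no two Γ_A-adjacent points receive the same color. -/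
/-!
Being Γ-closed makes `A` a subgroup, and an edge `{x, y, z}` with `z ∈ A` yields
`g j x + g k y ∈ A` for some `j ≠ k`. Since `A` is closed under `g j` and under the inverse of
`g k`, the coset of `y` is determined by that of `x`, `j`, `k` and the index of the hypergraph; and
`x, y` lie in different cosets, as otherwise `g j x + g k x ∈ A` would force `x ∈ A`. So the
remainder graph maps homomorphically to a locally countable graph on `X ⧸ A`, which is colored
with `ℕ` by numbering each of its (countable) connected components injectively.
-/

variable {X : Type*} [AddCommGroup X]

namespace SimpleGraph

variable {V : Type*} (G : SimpleGraph V)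

theorem countable_setOf_exists_walk_length (hG : ∀ v, (G.neighborSet v).Countable) (n : ℕ) :
    ∀ v, {w | ∃ p : G.Walk v w, p.length = n}.Countable := by
  induction n with
  | zero =>
    refine fun v => (Set.countable_singleton v).mono ?_
    rintro w ⟨p, hp⟩
    exact (Walk.eq_of_length_eq_zero hp).symm
  | succ n ih =>
    refine fun v => ((hG v).biUnion fun u _ => ih u).mono ?_
    rintro w ⟨_ | ⟨hvu, p⟩, hp⟩
    · simp at hp
    · exact Set.mem_biUnion hvu ⟨p, by simpa using hp⟩

theorem countable_setOf_reachable (hG : ∀ v, (G.neighborSet v).Countable) (v : V) :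
    {w | G.Reachable v w}.Countable := by
  refine (Set.countable_iUnion fun n => G.countable_setOf_exists_walk_length hG n v).mono ?_
  rintro w ⟨p⟩
  exact Set.mem_iUnion.2 ⟨p.length, p, rfl⟩

theorem exists_coloring_nat (hG : ∀ v, (G.neighborSet v).Countable) :
    Nonempty (G.Coloring ℕ) := by
  have hsupp : ∀ C : G.ConnectedComponent, C.supp.Countable := by
    refine ConnectedComponent.ind fun v => (G.countable_setOf_reachable hG v).mono ?_
    intro w hw
    exact (ConnectedComponent.exact ((ConnectedComponent.mem_supp_iff _ w).1 hw)).symm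
  choose f hf using fun C => Set.countable_iff_exists_injOn.1 (hsupp C)
  refine ⟨Coloring.mk (fun v => f (G.connectedComponentMk v) v) fun {v w} hvw hc => ?_⟩
  have hC : G.connectedComponentMk v = G.connectedComponentMk w :=
    ConnectedComponent.sound hvw.reachable
  exact G.ne_of_adj hvw <| hf _ rfl hC.symm (hc.trans (by rw [hC]))

end SimpleGraph

theorem QuotientAddGroup.subsingleton_setOf_add_mem {B : AddSubgroup X} {f h : X →+ X}
    (hf : ∀ x ∈ B, f x ∈ B) (hh : ∀ x, h x ∈ B → x ∈ B) (p : X ⧸ B) :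
    {q : X ⧸ B | ∃ x y : X, (x : X ⧸ B) = p ∧ (y : X ⧸ B) = q ∧ f x + h y ∈ B}.Subsingleton := by
  rintro _ ⟨x, y, rfl, rfl, hxy⟩ _ ⟨x', y', hx, rfl, hxy'⟩
  rw [QuotientAddGroup.eq_iff_sub_mem] at hx ⊢
  refine hh _ ?_
  have hsplit : h (y - y') = (f x + h y) - (f x' + h y') + f (x' - x) := by
    simp only [map_sub]
    abel
  rw [hsplit]
  exact add_mem (sub_mem hxy hxy') (hf _ hx)

theorem SlimEdge.exists_add_eq_zero {g : Fin 3 → X →+ X} {x y z : X} (h : SlimEdge g x y z) :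
    ∃ j k l : Fin 3, j ≠ k ∧ g j x + g k y + g l z = 0 := by
  obtain ⟨-, -, -, σ, hσ⟩ := h
  refine ⟨σ⁻¹ 0, σ⁻¹ 1, σ⁻¹ 2, σ⁻¹.injective.ne (by decide), ?_⟩
  have hreindex := Equiv.sum_comp σ fun s => g (σ⁻¹ s) (![x, y, z] s)
  simp only [Fin.sum_univ_three, Equiv.Perm.coe_inv, Equiv.symm_apply_apply] at hreindex
  simpa [hσ] using hreindex.symm

variable {ι : Type*} {g : ι → Fin 3 → X →+ X} {A : Set X}

variable (g) in
def cosetGraph (B : AddSubgroup X) : SimpleGraph (X ⧸ B) :=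
  SimpleGraph.fromRel fun p q =>
    ∃ i j k, ∃ x y : X, (x : X ⧸ B) = p ∧ (y : X ⧸ B) = q ∧ g i j x + g i k y ∈ B

namespace GammaClosed

def addSubgroup (hA : GammaClosed g A) : AddSubgroup X where
  carrier := A
  zero_mem' := hA.1
  add_mem' {x y} hx hy := by simpa using hA.2.1 x hx (-y) (by simpa using hA.2.1 0 hA.1 y hy)
  neg_mem' {x} hx := by simpa using hA.2.1 0 hA.1 x hx

@[simp]
theorem mem_addSubgroup (hA : GammaClosed g A) {x : X} : x ∈ hA.addSubgroup ↔ x ∈ A :=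
  Iff.rfl

theorem map_mem (hA : GammaClosed g A) (i : ι) (j : Fin 3) {x : X} (hx : x ∈ A) : g i j x ∈ A :=
  hA.2.2.1 i j x hx

theorem mem_of_map_mem (hA : GammaClosed g A) (i : ι) (j : Fin 3) {x : X} (hx : g i j x ∈ A) :
    x ∈ A :=
  hA.2.2.2.1 i j x hx

theorem mem_of_add_map_mem (hA : GammaClosed g A) (i : ι) {j k : Fin 3} (hjk : j ≠ k) {x : X}
    (hx : g i j x + g i k x ∈ A) : x ∈ A :=
  hA.2.2.2.2 i j k hjk x hx

theorem countable_neighborSet [Countable ι] (hA : GammaClosed g A) (p : X ⧸ hA.addSubgroup) :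
    ((cosetGraph g hA.addSubgroup).neighborSet p).Countable := by
  have hsub (i : ι) (j k : Fin 3) := QuotientAddGroup.subsingleton_setOf_add_mem
    (f := g i j) (h := g i k) (fun _ => hA.map_mem i j) (fun _ => hA.mem_of_map_mem i k) p
  refine (Set.countable_iUnion fun t : ι × Fin 3 × Fin 3 =>
    (hsub t.1 t.2.1 t.2.2).countable.union (hsub t.1 t.2.2 t.2.1).countable).mono ?_
  rintro q ⟨-, ⟨i, j, k, x, y, hx, hy, hxy⟩ | ⟨i, j, k, y, x, hy, hx, hyx⟩⟩
  · exact Set.mem_iUnion.2 ⟨(i, j, k), Or.inl ⟨x, y, hx, hy, hxy⟩⟩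
  · exact Set.mem_iUnion.2 ⟨(i, j, k), Or.inr ⟨x, y, hx, hy, by rwa [add_comm]⟩⟩

theorem cosetGraph_adj (hA : GammaClosed g A) {x y : X} (h : RemAdj g A x y) :
    (cosetGraph g hA.addSubgroup).Adj x y := by
  obtain ⟨hx, -, -, i, z, hz, hedge⟩ := h
  obtain ⟨j, k, l, hjk, hsum⟩ := hedge.exists_add_eq_zero
  have hxy : g i j x + g i k y ∈ hA.addSubgroup := by
    rw [eq_neg_of_add_eq_zero_left hsum]
    exact neg_mem (hA.map_mem i l hz)
  refine ⟨fun hcoset => hx (hA.mem_of_add_map_mem i hjk ?_), Or.inl ⟨i, j, k, x, y, rfl, rfl, hxy⟩⟩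
  rw [QuotientAddGroup.eq_iff_sub_mem] at hcoset
  have hsplit : g i j x + g i k x = (g i j x + g i k y) + g i k (x - y) := by
    simp only [map_sub]
    abel
  rw [← hA.mem_addSubgroup, hsplit]
  exact add_mem hxy (hA.map_mem i k hcoset)

end GammaClosed

theorem stmt6_general (g : ℕ → Fin 3 → X →+ X)
    (A : Set X) (hA : GammaClosed g A) :
    ∃ c : X → ℕ, ∀ x y : X, RemAdj g A x y → c x ≠ c y := by
  obtain ⟨C⟩ := (cosetGraph g hA.addSubgroup).exists_coloring_nat hA.countable_neighborSet
  exact ⟨fun x => C x, fun x y h => C.valid (hA.cosetGraph_adj h)⟩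

/-- For a countable union Γ of slim linear hypergraphs and a countable Γ-closed set `A`,
the remainder graph `Γ_A` has countable chromatic number. -/
theorem stmt6 (g : ℕ → Fin 3 → X →+ X) (hg : ∀ i, IsSlim (g i))
    (A : Set X) (hA : GammaClosed g A) (hAc : A.Countable) :
    ∃ c : X → ℕ, ∀ x y : X, RemAdj g A x y → c x ≠ c y :=
  stmt6_general g A hA
end

section
/- The amalgamation of a coherent sequence of colorings is a proper coloring of the hypergraph Γ: no Γ-hyperedge contained in the union of the domains is monochromatic under the amalgamated coloring. -/
/-!
Let `m` be the largest least index among the three points of a hyperedge. Since each `A j` is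
Γ-closed, a hyperedge with two points in `A j` lies entirely in `A j`; hence at least two of the
points have least index `m`. If all three do, the hyperedge lies in `A m` and `c m` is not constant
on it. If exactly two do, the third lies in `⋃ j < m, A j`, so the other two are adjacent in the
remainder graph and `d m` separates them.
-/

variable {X : Type*} [AddCommGroup X]

namespace SlimEdge

variable {g : Fin 3 → X →+ X} {a b c : X}

theorem swap01 (h : SlimEdge g a b c) : SlimEdge g b a c := by
  obtain ⟨hab, hac, hbc, σ, hσ⟩ := h
  refine ⟨hab.symm, hbc, hac, σ.trans (Equiv.swap 0 1), ?_⟩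
  have hv : ∀ j : Fin 3, ![b, a, c] (Equiv.swap (0 : Fin 3) 1 j) = ![a, b, c] j := by
    intro j; fin_cases j <;> simp [Equiv.swap_apply_of_ne_of_ne]
  simpa only [Equiv.trans_apply, hv] using hσ

theorem swap12 (h : SlimEdge g a b c) : SlimEdge g a c b := by
  obtain ⟨hab, hac, hbc, σ, hσ⟩ := h
  refine ⟨hac, hab, hbc.symm, σ.trans (Equiv.swap 1 2), ?_⟩
  have hv : ∀ j : Fin 3, ![a, c, b] (Equiv.swap (1 : Fin 3) 2 j) = ![a, b, c] j := by
    intro j; fin_cases j <;> simp [Equiv.swap_apply_of_ne_of_ne]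
  simpa only [Equiv.trans_apply, hv] using hσ

end SlimEdge

namespace GEdge

variable {ι : Type*} {g : ι → Fin 3 → X →+ X} {a b c : X}

theorem swap01 (h : GEdge g a b c) : GEdge g b a c :=
  h.imp fun _ => SlimEdge.swap01

theorem swap12 (h : GEdge g a b c) : GEdge g a c b :=
  h.imp fun _ => SlimEdge.swap12

end GEdge

def GammaClosed.toAddSubgroup {ι : Type*} {g : ι → Fin 3 → X →+ X} {A : Set X}
    (hA : GammaClosed g A) : AddSubgroup X :=
  AddSubgroup.ofSub A ⟨0, hA.1⟩ fun x hx y hy => by simpa [sub_eq_add_neg] using hA.2.1 x hx y hy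

theorem GammaClosed.mem_of_slimEdge {ι : Type*} {g : ι → Fin 3 → X →+ X} {A : Set X}
    (hA : GammaClosed g A) {i : ι} {a b c : X} (hs : SlimEdge (g i) a b c)
    (ha : a ∈ A) (hb : b ∈ A) : c ∈ A := by
  obtain ⟨-, -, map_mem, mem_of_map_mem, -⟩ := id hA
  obtain ⟨-, -, -, σ, hσ⟩ := hs
  set v : Fin 3 → X := ![a, b, c]
  set k := σ.symm 2
  have hv : ∀ j ≠ k, g i j (v (σ j)) ∈ hA.toAddSubgroup := by
    intro j hj
    refine map_mem i j _ ?_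
    have : σ j ≠ 2 := fun h => hj (σ.symm_apply_eq.mpr h.symm).symm
    generalize σ j = p at this ⊢
    fin_cases p <;> simp_all [v]
  have hsum : ∑ j, g i j (v (σ j)) = 0 := by rw [Fin.sum_univ_three]; exact hσ
  rw [← Finset.add_sum_erase _ _ (Finset.mem_univ k)] at hsum
  have hk : g i k c ∈ hA.toAddSubgroup := by
    rw [show c = v (σ k) by simp [k, v], eq_neg_of_add_eq_zero_left hsum]
    exact neg_mem (sum_mem fun j hj => hv j (Finset.ne_of_mem_erase hj))
  exact mem_of_map_mem i k c hk

theorem two_eq_max_of_le_max {α : Type*} [LinearOrder α] {a b c : α}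
    (ha : a ≤ max b c) (hb : b ≤ max a c) (hc : c ≤ max a b) :
    (a = b ∧ c ≤ a) ∨ (a = c ∧ b ≤ a) ∨ (b = c ∧ a ≤ b) := by
  grind

def IsProperColoring {ι C : Type*} (g : ι → Fin 3 → X →+ X) (A : Set X) (f : X → C) : Prop :=
  ∀ x₀ x₁ x₂, x₀ ∈ A → x₁ ∈ A → x₂ ∈ A → GEdge g x₀ x₁ x₂ → ¬(f x₀ = f x₁ ∧ f x₁ = f x₂)

def IsProperRemColoring {ι C : Type*} (g : ι → Fin 3 → X →+ X) (B A : Set X) (f : X → C) :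
    Prop :=
  ∀ x y, x ∈ A → y ∈ A → RemAdj g B x y → f x ≠ f y

def amalgam {I C D : Type*} (c : I → X → C) (d : I → X → D) (idx : X → I) (x : X) : C × D :=
  (c (idx x) x, d (idx x) x)

theorem notMem_biUnion_lt_idx {α I : Type*} [Preorder I] {A : I → Set α} {idx : α → I}
    (hidx : ∀ x ∈ ⋃ i, A i, IsLeast {i | x ∈ A i} (idx x)) {x : α} (hx : x ∈ ⋃ i, A i) :
    x ∉ ⋃ j ∈ {j | j < idx x}, A j := by
  simp only [Set.mem_iUnion, not_exists]
  exact fun j hj hxj => (hj.trans_le ((hidx x hx).2 hxj)).false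

section Coherent

variable {ι I C D : Type*} [LinearOrder I] {g : ι → Fin 3 → X →+ X} {A : I → Set X}
  {idx : X → I}

theorem idx_le_max_of_gEdge (mono : Monotone A) (hA : ∀ i, GammaClosed g (A i))
    (hidx : ∀ x ∈ ⋃ i, A i, IsLeast {i | x ∈ A i} (idx x)) {a b z : X}
    (ha : a ∈ ⋃ i, A i) (hb : b ∈ ⋃ i, A i) (hz : z ∈ ⋃ i, A i) (h : GEdge g a b z) :
    idx z ≤ max (idx a) (idx b) := by
  obtain ⟨i, hs⟩ := h
  exact (hidx z hz).2 <| (hA _).mem_of_slimEdge hs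
    (mono (le_max_left _ _) (hidx a ha).1) (mono (le_max_right _ _) (hidx b hb).1)

theorem amalgam_not_monochromatic_of_idx_eq_of_le
    (hidx : ∀ x ∈ ⋃ i, A i, IsLeast {i | x ∈ A i} (idx x))
    {c : I → X → C} {d : I → X → D} (hc : ∀ i, IsProperColoring g (A i) (c i))
    (hd : ∀ i, IsProperRemColoring g (⋃ j ∈ {j | j < i}, A j) (A i) (d i)) {a b z : X}
    (ha : a ∈ ⋃ i, A i) (hb : b ∈ ⋃ i, A i) (hz : z ∈ ⋃ i, A i) (h : GEdge g a b z)
    (hab : idx a = idx b) (hza : idx z ≤ idx a) :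
    ¬(amalgam c d idx a = amalgam c d idx b ∧ amalgam c d idx b = amalgam c d idx z) := by
  rintro ⟨habc, hbzc⟩
  simp only [amalgam, Prod.mk.injEq, ← hab] at habc hbzc
  have haA : a ∈ A (idx a) := (hidx a ha).1
  have hbA : b ∈ A (idx a) := hab ▸ (hidx b hb).1
  rcases hza.lt_or_eq with hlt | heq
  · obtain ⟨i, hs⟩ := h
    exact hd _ a b haA hbA ⟨notMem_biUnion_lt_idx hidx ha, hab ▸ notMem_biUnion_lt_idx hidx hb,
      hs.1, i, z, Set.mem_biUnion hlt (hidx z hz).1, hs⟩ habc.2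
  · rw [heq] at hbzc
    exact hc _ a b z haA hbA (heq ▸ (hidx z hz).1) h ⟨habc.1, hbzc.1⟩

end Coherent

theorem stmt7_general (g : ℕ → Fin 3 → X →+ X)
    {I : Type*} [LinearOrder I] (A : I → Set X) (mono : Monotone A)
    (hA : ∀ i, GammaClosed g (A i))
    (idx : X → I)
    (hidx : ∀ x ∈ ⋃ i, A i, x ∈ A (idx x) ∧ ∀ j, x ∈ A j → idx x ≤ j)
    (c d : I → X → ℕ)
    (hc : ∀ i, ∀ x₀ x₁ x₂, x₀ ∈ A i → x₁ ∈ A i → x₂ ∈ A i → GEdge g x₀ x₁ x₂ →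
      ¬(c i x₀ = c i x₁ ∧ c i x₁ = c i x₂))
    (hd : ∀ i, ∀ x y, x ∈ A i → y ∈ A i →
      RemAdj g (⋃ j ∈ {j | j < i}, A j) x y → d i x ≠ d i y) :
    ∀ x₀ x₁ x₂, x₀ ∈ (⋃ i, A i) → x₁ ∈ (⋃ i, A i) → x₂ ∈ (⋃ i, A i) →
      GEdge g x₀ x₁ x₂ →
      ¬((c (idx x₀) x₀, d (idx x₀) x₀) = (c (idx x₁) x₁, d (idx x₁) x₁) ∧
        (c (idx x₁) x₁, d (idx x₁) x₁) = (c (idx x₂) x₂, d (idx x₂) x₂)) := by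
  intro x₀ x₁ x₂ h₀ h₁ h₂ hedge ⟨h₀₁, h₁₂⟩
  have h₀₂ := h₀₁.trans h₁₂
  have le₂ := idx_le_max_of_gEdge mono hA hidx h₀ h₁ h₂ hedge
  have le₁ := idx_le_max_of_gEdge mono hA hidx h₀ h₂ h₁ hedge.swap12
  have le₀ := idx_le_max_of_gEdge mono hA hidx h₁ h₂ h₀ hedge.swap01.swap12
  rcases two_eq_max_of_le_max le₀ le₁ le₂ with ⟨e, le⟩ | ⟨e, le⟩ | ⟨e, le⟩
  · exact amalgam_not_monochromatic_of_idx_eq_of_le hidx hc hd h₀ h₁ h₂ hedge e le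
      ⟨h₀₁, h₁₂⟩
  · exact amalgam_not_monochromatic_of_idx_eq_of_le hidx hc hd h₀ h₂ h₁ hedge.swap12 e le
      ⟨h₀₂, h₁₂.symm⟩
  · exact amalgam_not_monochromatic_of_idx_eq_of_le hidx hc hd h₁ h₂ h₀ hedge.swap01.swap12 e le
      ⟨h₁₂, h₀₂.symm⟩

/-- The amalgamation of a coherent sequence of colorings is a proper Γ-coloring:
given an increasing sequence of Γ-closed sets `A i` along a linear order, proper
Γ-colorings `c i` of each `A i`, proper colorings `d i` of the remainder graphs
`Γ_{⋃_{j<i} A j}` restricted to `A i`, and a least-index function `idx`, the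
amalgamated coloring `x ↦ (c (idx x) x, d (idx x) x)` leaves no Γ-hyperedge inside
`⋃ i, A i` monochromatic. -/
theorem stmt7 (g : ℕ → Fin 3 → X →+ X) (hg : ∀ i, IsSlim (g i))
    {I : Type*} [LinearOrder I] (A : I → Set X) (mono : Monotone A)
    (hA : ∀ i, GammaClosed g (A i))
    (idx : X → I)
    (hidx : ∀ x ∈ ⋃ i, A i, x ∈ A (idx x) ∧ ∀ j, x ∈ A j → idx x ≤ j)
    (c d : I → X → ℕ)
    (hc : ∀ i, ∀ x₀ x₁ x₂, x₀ ∈ A i → x₁ ∈ A i → x₂ ∈ A i → GEdge g x₀ x₁ x₂ →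
      ¬(c i x₀ = c i x₁ ∧ c i x₁ = c i x₂))
    (hd : ∀ i, ∀ x y, x ∈ A i → y ∈ A i →
      RemAdj g (⋃ j ∈ {j | j < i}, A j) x y → d i x ≠ d i y) :
    ∀ x₀ x₁ x₂, x₀ ∈ (⋃ i, A i) → x₁ ∈ (⋃ i, A i) → x₂ ∈ (⋃ i, A i) →
      GEdge g x₀ x₁ x₂ →
      ¬((c (idx x₀) x₀, d (idx x₀) x₀) = (c (idx x₁) x₁, d (idx x₁) x₁) ∧
        (c (idx x₁) x₁, d (idx x₁) x₁) = (c (idx x₂) x₂, d (idx x₂) x₂)) :=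
  stmt7_general g A mono hA idx hidx c d hc hd
end

section
/- Let X be a set and Γ a 3-uniform hypergraph on X such that there is d ∈ ℕ with: for all x_0, x_1 ∈ X, the set {x_2 : {x_0,x_1,x_2} ∈ Γ} has cardinality at most d. Then the poset R(Γ) of finite partial proper Γ-colorings p : X ⇀ ℕ (ordered by reverse inclusion) is σ-Ramsey-centered: it is a countable union of Ramsey-centered sets. -/
variable {X : Type*} [DecidableEq X]

/-- A condition of the finite approximation coloring poset `R(Γ)` for a 3-uniform
hypergraph `Γ`: a finite partial function into ℕ under which no Γ-hyperedge contained
in its domain is monochromatic. -/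
def IsCond3 (Γ : Set (Finset X)) (p : Finset (X × ℕ)) : Prop :=
  (∀ a ∈ p, ∀ b ∈ p, Prod.fst a = Prod.fst b → a = b) ∧
  ∀ x₀ x₁ x₂ : X, ∀ n : ℕ, x₀ ≠ x₁ → x₀ ≠ x₂ → x₁ ≠ x₂ →
    ({x₀, x₁, x₂} : Finset X) ∈ Γ →
    ¬((x₀, n) ∈ p ∧ (x₁, n) ∈ p ∧ (x₂, n) ∈ p)

/-- A subset `A` of the poset (conditions ordered by reverse inclusion) is
Ramsey-centered: for every `n` there is `m` such that among any `m` elements of `A`,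
some `n` of them have a common lower bound in the poset. -/
def RamseyCentered (Cond A : Set (Finset (X × ℕ))) : Prop :=
  ∀ n : ℕ, ∃ m : ℕ, ∀ f : Fin m → Finset (X × ℕ), (∀ i, f i ∈ A) →
    ∃ b : Finset (Fin m), b.card = n ∧ ∃ r ∈ Cond, ∀ i ∈ b, f i ⊆ r

/-!
Fix the domain size `k` and the colour bound `l`. Among many conditions of this shape, the
sunflower lemma applied to their domains, followed by pigeonholing on the finitely many colourings
of the kernel `c`, yields many conditions whose union is a function and whose domains pairwise meet
exactly in `c`. A hyperedge inside the domain of the union of some of them, but inside no single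
domain, has either two vertices in one domain and the third in another petal, or one vertex in each
of three petals (a `Conflict`). Since petals are disjoint and two points have at most `d` common
completions, a domain, or a pair of domains, is in conflict with at most `k²d` others, so a greedy
choice gives `n` conditions without conflicts; their union is then a proper colouring.
-/

open Finset

section Sunflower

variable {α ι : Type*} [DecidableEq α]

theorem exists_maximal_pairwiseDisjoint_subfamily (f : ι → Finset α) (S : Finset ι) :
    ∃ P ⊆ S, (P : Set ι).PairwiseDisjoint f ∧
      ∀ i ∈ S, Disjoint (f i) (P.biUnion f) → i ∈ P := by
  classical
  obtain ⟨P, hP, hmax⟩ := exists_max_image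
    (S.powerset.filter fun P : Finset ι => (P : Set ι).PairwiseDisjoint f) card
    ⟨∅, by simp⟩
  obtain ⟨hPS, hPdisj⟩ := mem_filter.1 hP
  refine ⟨P, mem_powerset.1 hPS, hPdisj, fun i hi hdisj => ?_⟩
  by_contra hiP
  have hins : (↑(insert i P) : Set ι).PairwiseDisjoint f := by
    rw [coe_insert]
    exact hPdisj.insert fun j hj _ => hdisj.mono_right (subset_biUnion_of_mem f hj)
  have := hmax (insert i P)
    (mem_filter.2 ⟨mem_powerset.2 (insert_subset hi (mem_powerset.1 hPS)), hins⟩)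
  rw [card_insert_of_notMem hiP] at this
  omega

theorem exists_sunflower (k s : ℕ) :
    ∃ N, ∀ {ι : Type*} [DecidableEq ι] (f : ι → Finset α) (S : Finset ι),
      (∀ i ∈ S, #(f i) ≤ k) → N ≤ #S →
      ∃ c : Finset α, #c ≤ k ∧ ∃ G ⊆ S, s ≤ #G ∧ (∀ i ∈ G, c ⊆ f i) ∧
        (G : Set ι).Pairwise fun i j => f i ∩ f j = c := by
  induction k with
  | zero =>
    refine ⟨s, fun f S hf hS =>
      ⟨∅, by simp, S, subset_rfl, hS, by simp, fun i hi j hj _ => ?_⟩⟩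
    simp [card_eq_zero.1 (Nat.le_zero.1 (hf i hi)), card_eq_zero.1 (Nat.le_zero.1 (hf j hj))]
  | succ k ih =>
    obtain ⟨N, hN⟩ := ih
    refine ⟨s + (k + 1) * s * N, fun {ι} _ f S hf hS => ?_⟩
    obtain ⟨P, hPS, hPdisj, hPmax⟩ := exists_maximal_pairwiseDisjoint_subfamily f S
    by_cases hP : s ≤ #P
    · exact ⟨∅, by simp, P, hPS, hP, by simp, fun i hi j hj hij =>
        disjoint_iff_inter_eq_empty.1 (hPdisj hi hj hij)⟩
    set Y := P.biUnion f
    have hY : #Y ≤ (k + 1) * s := calc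
      #Y ≤ ∑ i ∈ P, #(f i) := card_biUnion_le
      _ ≤ #P • (k + 1) := sum_le_card_nsmul _ _ _ fun i hi => hf i (hPS hi)
      _ ≤ (k + 1) * s := by rw [smul_eq_mul, mul_comm]; gcongr; omega
    -- every member outside `P` meets `Y`, so some point of `Y` lies in `N` members
    obtain ⟨y, -, hy⟩ : ∃ y ∈ Y, N ≤ #{i ∈ S | y ∈ f i} := by
      by_contra! hsmall
      have hcover : S ⊆ P ∪ Y.biUnion fun y => {i ∈ S | y ∈ f i} := by
        intro i hi
        by_cases hiY : Disjoint (f i) Y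
        · exact mem_union_left _ (hPmax i hi hiY)
        · obtain ⟨y, hyi, hyY⟩ := not_disjoint_iff.1 hiY
          exact mem_union_right _ (mem_biUnion.2 ⟨y, hyY, mem_filter.2 ⟨hi, hyi⟩⟩)
      have := calc
        #S ≤ #P + ∑ y ∈ Y, #{i ∈ S | y ∈ f i} :=
          (card_le_card hcover).trans
            ((card_union_le _ _).trans (by gcongr; exact card_biUnion_le))
        _ ≤ #P + #Y • N := by
          gcongr; exact sum_le_card_nsmul _ _ _ fun y hy => (hsmall y hy).le
        _ ≤ #P + (k + 1) * s * N := by rw [smul_eq_mul]; gcongr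
      omega
    obtain ⟨c, hc, G, hGS, hG, hcG, hGc⟩ := hN (fun i => (f i).erase y) {i ∈ S | y ∈ f i}
      (fun i hi => by
        rw [card_erase_of_mem (mem_filter.1 hi).2]; have := hf i (mem_filter.1 hi).1; omega) hy
    have hyG : ∀ i ∈ G, y ∈ f i := fun i hi => (mem_filter.1 (hGS hi)).2
    refine ⟨insert y c, (card_insert_le _ _).trans (by omega), G, hGS.trans (filter_subset _ _),
      hG, fun i hi => insert_subset (hyG i hi) ((hcG i hi).trans (erase_subset _ _)),
      fun i hi j hj hij => ?_⟩
    rw [← hGc hi hj hij, erase_inter, inter_erase, erase_idem,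
      insert_erase (mem_inter.2 ⟨hyG i hi, hyG j hj⟩)]

theorem pairwiseDisjoint_sdiff_of_pairwise_inter_eq {f : ι → Finset α} {c : Finset α}
    {G : Set ι} (hG : G.Pairwise fun i j => f i ∩ f j = c) :
    G.PairwiseDisjoint fun i => f i \ c := fun _ hi _ hj hij =>
  disjoint_left.2 fun _ hxi hxj => (mem_sdiff.1 hxi).2 <|
    hG hi hj hij ▸ mem_inter.2 ⟨(mem_sdiff.1 hxi).1, (mem_sdiff.1 hxj).1⟩

end Sunflower

section Greedy

variable {ι : Type*} [DecidableEq ι]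

theorem exists_independent_of_outdegree_le (R : ι → ι → Prop) [DecidableRel R] (Δ n : ℕ)
    (S : Finset ι) (hR : ∀ i ∈ S, #{j ∈ S | R i j} ≤ Δ) (hS : (2 * Δ + 1) * n ≤ #S) :
    ∃ U ⊆ S, #U = n ∧ ∀ i ∈ U, ∀ j ∈ U, i ≠ j → ¬ R i j := by
  induction n generalizing S with
  | zero => exact ⟨∅, empty_subset _, rfl, by simp⟩
  | succ n ih =>
    -- the in-degrees sum to the out-degrees, so some vertex has in-degree at most `Δ`
    obtain ⟨i, hi, hin⟩ : ∃ i ∈ S, #{j ∈ S | R j i} ≤ Δ := by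
      by_contra! hbig
      have hne : S.Nonempty := card_pos.1 (by nlinarith)
      have := calc
        #S • Δ < ∑ i ∈ S, #{j ∈ S | R j i} := by
          rw [← sum_const]; exact sum_lt_sum_of_nonempty hne hbig
        _ = ∑ j ∈ S, #{i ∈ S | R j i} :=
          (sum_card_bipartiteAbove_eq_sum_card_bipartiteBelow _).symm
        _ ≤ #S • Δ := sum_le_card_nsmul _ _ _ hR
      exact this.false
    set N := insert i ({j ∈ S | R i j} ∪ {j ∈ S | R j i})
    have hN : #N ≤ 2 * Δ + 1 := (card_insert_le _ _).trans <| by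
      have := card_union_le {j ∈ S | R i j} {j ∈ S | R j i}
      have := hR i hi
      omega
    obtain ⟨U, hUS, hU, hUind⟩ := ih (S \ N)
      (fun j hj => (card_le_card (filter_subset_filter _ sdiff_subset)).trans
        (hR j (mem_sdiff.1 hj).1))
      (by have := le_card_sdiff N S; rw [Nat.mul_succ] at hS; omega)
    have hiU : ∀ j ∈ U, ¬ R i j ∧ ¬ R j i := fun j hj => by
      have hjS := mem_sdiff.1 (hUS hj)
      simp only [N, mem_insert, mem_union, mem_filter, not_or] at hjS
      exact ⟨fun h => hjS.2.2.1 ⟨hjS.1, h⟩, fun h => hjS.2.2.2 ⟨hjS.1, h⟩⟩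
    refine ⟨insert i U, insert_subset hi (hUS.trans sdiff_subset), ?_, ?_⟩
    · rw [card_insert_of_notMem fun h => (mem_sdiff.1 (hUS h)).2 (mem_insert_self _ _), hU]
    · intro a ha b hb hab
      rcases mem_insert.1 ha with rfl | haU <;> rcases mem_insert.1 hb with rfl | hbU
      exacts [absurd rfl hab, (hiU b hbU).1, (hiU a haU).2, hUind a haU b hbU hab]

theorem exists_independent_of_codegree_le (R : ι → ι → ι → Prop)
    [∀ i j, DecidablePred (R i j)] (hR₁₂ : ∀ i j k, R i j k → R j i k)
    (hR₂₃ : ∀ i j k, R i j k → R i k j) (Δ n : ℕ) (S : Finset ι)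
    (hR : ∀ i ∈ S, ∀ j ∈ S, #{k ∈ S | R i j k} ≤ Δ) (hS : n + Δ * n * n ≤ #S) :
    ∃ U ⊆ S, #U = n ∧ ∀ i ∈ U, ∀ j ∈ U, ∀ k ∈ U, i ≠ j → i ≠ k → j ≠ k → ¬ R i j k := by
  suffices ∀ t ≤ n, ∃ U ⊆ S, #U = t ∧
      ∀ i ∈ U, ∀ j ∈ U, ∀ k ∈ U, i ≠ j → i ≠ k → j ≠ k → ¬ R i j k from this n le_rfl
  intro t
  induction t with
  | zero => exact fun _ => ⟨∅, empty_subset _, rfl, by simp⟩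
  | succ t ih =>
    intro ht
    obtain ⟨U, hUS, hU, hUfree⟩ := ih (by omega)
    set E := U ∪ (U ×ˢ U).biUnion fun z => {k ∈ S | R z.1 z.2 k}
    have hE : #E < #S := calc
      #E ≤ t + t * t * Δ := by
        refine (card_union_le _ _).trans ?_
        rw [hU]
        gcongr
        refine card_biUnion_le.trans ((sum_le_card_nsmul _ _ Δ fun z hz => ?_).trans ?_)
        · rw [mem_product] at hz
          exact hR _ (hUS hz.1) _ (hUS hz.2)
        · rw [card_product, hU, smul_eq_mul]
      _ < n + Δ * n * n := by
        have : t * t * Δ ≤ Δ * n * n := by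
          rw [mul_comm, ← mul_assoc]; gcongr <;> omega
        omega
      _ ≤ #S := hS
    obtain ⟨z, hzS, hzE⟩ := exists_mem_notMem_of_card_lt_card hE
    have hzU : z ∉ U := fun h => hzE (mem_union_left _ h)
    have hz : ∀ a ∈ U, ∀ b ∈ U, ¬ R a b z := fun a ha b hb h =>
      hzE (mem_union_right _
        (mem_biUnion.2 ⟨(a, b), mem_product.2 ⟨ha, hb⟩, mem_filter.2 ⟨hzS, h⟩⟩))
    refine ⟨insert z U, insert_subset hzS hUS, by rw [card_insert_of_notMem hzU, hU], ?_⟩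
    intro a ha b hb c hc hab hac hbc
    rcases mem_insert.1 ha with rfl | haU <;> rcases mem_insert.1 hb with rfl | hbU <;>
      rcases mem_insert.1 hc with rfl | hcU
    · exact absurd rfl hab
    · exact absurd rfl hab
    · exact absurd rfl hac
    · exact fun h => hz b hbU c hcU (hR₂₃ _ _ _ (hR₁₂ _ _ _ h))
    · exact absurd rfl hbc
    · exact fun h => hz a haU c hcU (hR₂₃ _ _ _ h)
    · exact hz a haU b hbU
    · exact hUfree a haU b hbU c hcU hab hac hbc

end Greedy

section Conditions

variable {Γ : Set (Finset X)}

def dom (p : Finset (X × ℕ)) : Finset X := p.image Prod.fst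

def link (Γ : Set (Finset X)) (a b : X) : Set X := {x | ({a, b, x} : Finset X) ∈ Γ}

def condsOfShape (Γ : Set (Finset X)) (k l : ℕ) : Set (Finset (X × ℕ)) :=
  {p | IsCond3 Γ p ∧ #p = k ∧ ∀ a ∈ p, a.2 < l}

theorem mem_condsOfShape_card_sup {p : Finset (X × ℕ)} (hp : IsCond3 Γ p) :
    p ∈ condsOfShape Γ #p (p.sup Prod.snd + 1) :=
  ⟨hp, rfl, fun _ ha => Nat.lt_succ_of_le (le_sup (f := Prod.snd) ha)⟩

def Conflict (Γ : Set (Finset X)) (c A B C : Finset X) : Prop :=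
  ∃ a ∈ A, ∃ b ∈ B, ∃ x ∈ C \ c, ({a, b, x} : Finset X) ∈ Γ

theorem Conflict.swap₁₂ {c A B C : Finset X} : Conflict Γ c A B C → Conflict Γ c B A C
  | ⟨a, ha, b, hb, x, hx, he⟩ => ⟨b, hb, a, ha, x, hx, by rwa [insert_comm]⟩

theorem Conflict.swap₂₃ {c A B C : Finset X} :
    Conflict Γ c (A \ c) (B \ c) C → Conflict Γ c (A \ c) (C \ c) B
  | ⟨a, ha, b, hb, x, hx, he⟩ => ⟨a, ha, x, hx, b, hb, by rwa [pair_comm]⟩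

open Classical in
theorem card_filter_conflict_le {d : ℕ}
    (hd : ∀ a b, (link Γ a b).Finite ∧ (link Γ a b).ncard ≤ d) {ι : Type*} (D : ι → Finset X)
    (c A B : Finset X) (T : Finset ι)
    (hT : (T : Set ι).PairwiseDisjoint fun k => D k \ c) :
    #{k ∈ T | Conflict Γ c A B (D k)} ≤ #A * #B * d := by
  set Y := (A ×ˢ B).biUnion fun z => (hd z.1 z.2).1.toFinset
  calc #{k ∈ T | Conflict Γ c A B (D k)}
      ≤ #({k ∈ T | Conflict Γ c A B (D k)}.biUnion fun k => (D k \ c) ∩ Y) := by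
        refine card_le_card_biUnion
          ((hT.subset (coe_subset.2 (filter_subset _ _))).mono fun k => inter_subset_left)
          fun k hk => ?_
        obtain ⟨a, ha, b, hb, x, hx, he⟩ := (mem_filter.1 hk).2
        exact ⟨x, mem_inter.2 ⟨hx, mem_biUnion.2
          ⟨(a, b), mem_product.2 ⟨ha, hb⟩, (Set.Finite.mem_toFinset _).2 he⟩⟩⟩
    _ ≤ #Y := card_le_card (biUnion_subset.2 fun k _ => inter_subset_right)
    _ ≤ ∑ z ∈ A ×ˢ B, #(hd z.1 z.2).1.toFinset := card_biUnion_le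
    _ ≤ #(A ×ˢ B) • d := sum_le_card_nsmul _ _ d fun z _ => by
        rw [← Set.ncard_eq_toFinset_card _ (hd z.1 z.2).1]; exact (hd z.1 z.2).2
    _ = #A * #B * d := by rw [card_product, smul_eq_mul]

theorem exists_common_mem_of_not_conflict {ι : Type*} (D : ι → Finset X) (c : Finset X)
    (U : Finset ι) (hc : ∀ i ∈ U, c ⊆ D i)
    (hpair : ∀ i ∈ U, ∀ j ∈ U, i ≠ j → ¬ Conflict Γ c (D i) (D i) (D j))
    (htriple : ∀ i ∈ U, ∀ j ∈ U, ∀ k ∈ U, i ≠ j → i ≠ k → j ≠ k →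
      ¬ Conflict Γ c (D i \ c) (D j \ c) (D k))
    {y₀ y₁ y₂ : X} (he : ({y₀, y₁, y₂} : Finset X) ∈ Γ) {i j k : ι} (hi : i ∈ U) (hj : j ∈ U)
    (hk : k ∈ U) (h₀ : y₀ ∈ D i) (h₁ : y₁ ∈ D j) (h₂ : y₂ ∈ D k) :
    ∃ t ∈ U, y₀ ∈ D t ∧ y₁ ∈ D t ∧ y₂ ∈ D t := by
  have third : ∀ {t s : ι} {a b x : X}, t ∈ U → s ∈ U → a ∈ D t → b ∈ D t → x ∈ D s →
      ({a, b, x} : Finset X) ∈ Γ → x ∈ D t := by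
    intro t s a b x ht hs ha hb hx he
    by_contra hxt
    exact hpair t ht s hs (by rintro rfl; exact hxt hx)
      ⟨a, ha, b, hb, x, mem_sdiff.2 ⟨hx, fun hxc => hxt (hc t ht hxc)⟩, he⟩
  have he₁ : ({y₀, y₂, y₁} : Finset X) ∈ Γ := by rwa [pair_comm]
  have he₀ : ({y₁, y₂, y₀} : Finset X) ∈ Γ := by rwa [pair_comm, insert_comm]
  by_contra! hnone
  have h₁i : y₁ ∉ D i := fun h => hnone i hi h₀ h (third hi hk h₀ h h₂ he)
  have h₂i : y₂ ∉ D i := fun h => h₁i (third hi hj h₀ h h₁ he₁)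
  have h₀j : y₀ ∉ D j := fun h => hnone j hj h h₁ (third hj hk h h₁ h₂ he)
  have h₂j : y₂ ∉ D j := fun h => h₀j (third hj hi h₁ h h₀ he₀)
  have h₀k : y₀ ∉ D k := fun h => hnone k hk h (third hk hj h h₂ h₁ he₁) h₂
  have h₁k : y₁ ∉ D k := fun h => h₀k (third hk hi h h₂ h₀ he₀)
  exact htriple i hi j hj k hk (by rintro rfl; exact h₁i h₁) (by rintro rfl; exact h₂i h₂)
    (by rintro rfl; exact h₂j h₂)
    ⟨y₀, mem_sdiff.2 ⟨h₀, fun h => h₀j (hc j hj h)⟩,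
      y₁, mem_sdiff.2 ⟨h₁, fun h => h₁i (hc i hi h)⟩,
      y₂, mem_sdiff.2 ⟨h₂, fun h => h₂i (hc i hi h)⟩, he⟩

theorem exists_le_card_filter_kernel_eq {ι : Type*} [DecidableEq ι] (p : ι → Finset (X × ℕ))
    (G : Finset ι) {c : Finset X} {k l s : ℕ} (hc : #c ≤ k) (hl : ∀ i ∈ G, ∀ a ∈ p i, a.2 < l)
    (hG : 2 ^ (k * l) * s ≤ #G) :
    ∃ ρ, s ≤ #{i ∈ G | (p i).filter (·.1 ∈ c) = ρ} := by
  obtain ⟨ρ, -, hρ⟩ := exists_le_card_fiber_of_mul_le_card_of_maps_to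
    (f := fun i => (p i).filter (·.1 ∈ c)) (t := (c ×ˢ range l).powerset)
    (fun i hi => mem_powerset.2 fun a ha => mem_product.2
      ⟨(mem_filter.1 ha).2, mem_range.2 (hl i hi a (mem_filter.1 ha).1)⟩)
    ⟨∅, empty_mem_powerset _⟩
    (calc _ = 2 ^ (#c * l) * s := by rw [card_powerset, card_product, card_range]
      _ ≤ 2 ^ (k * l) * s := by gcongr; · omega
      _ ≤ #G := hG)
  exact ⟨ρ, hρ⟩

theorem compatible_of_filter_kernel_eq {ι : Type*} (U : Finset ι) (p : ι → Finset (X × ℕ))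
    (c : Finset X) (ρ : Finset (X × ℕ)) (hp : ∀ i ∈ U, IsCond3 Γ (p i))
    (hpet : (U : Set ι).Pairwise fun i j => dom (p i) ∩ dom (p j) = c)
    (hρ : ∀ i ∈ U, (p i).filter (·.1 ∈ c) = ρ) :
    ∀ i ∈ U, ∀ j ∈ U, ∀ a ∈ p i, ∀ b ∈ p j, a.1 = b.1 → a = b := by
  intro i hi j hj a ha b hb hab
  by_cases hij : i = j
  · subst hij
    exact (hp i hi).1 a ha b hb hab
  have hac : a.1 ∈ c :=
    hpet hi hj hij ▸ mem_inter.2 ⟨mem_image_of_mem _ ha, hab ▸ mem_image_of_mem _ hb⟩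
  have haj : a ∈ (p j).filter (·.1 ∈ c) := by
    rw [hρ j hj, ← hρ i hi]
    exact mem_filter.2 ⟨ha, hac⟩
  exact (hp j hj).1 a (mem_filter.1 haj).1 b hb hab

theorem isCond3_sup {ι : Type*} (U : Finset ι) (p : ι → Finset (X × ℕ))
    (hp : ∀ i ∈ U, IsCond3 Γ (p i))
    (hcompat : ∀ i ∈ U, ∀ j ∈ U, ∀ a ∈ p i, ∀ b ∈ p j, a.1 = b.1 → a = b)
    (hcover : ∀ y₀ y₁ y₂ : X, ({y₀, y₁, y₂} : Finset X) ∈ Γ → ∀ i ∈ U, ∀ j ∈ U, ∀ k ∈ U,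
      y₀ ∈ dom (p i) → y₁ ∈ dom (p j) → y₂ ∈ dom (p k) →
      ∃ t ∈ U, y₀ ∈ dom (p t) ∧ y₁ ∈ dom (p t) ∧ y₂ ∈ dom (p t)) :
    IsCond3 Γ (U.sup p) := by
  have mem_of_mem_dom : ∀ {i j : ι} {x : X} {n : ℕ}, i ∈ U → j ∈ U → (x, n) ∈ p j →
      x ∈ dom (p i) → (x, n) ∈ p i := by
    intro i j x n hi hj hx hxi
    obtain ⟨⟨_, m⟩, ha, rfl⟩ := mem_image.1 hxi
    rw [hcompat i hi j hj _ ha _ hx rfl] at ha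
    exact ha
  refine ⟨fun a ha b hb hab => ?_, fun y₀ y₁ y₂ n h₀₁ h₀₂ h₁₂ he ⟨h₀, h₁, h₂⟩ => ?_⟩
  · obtain ⟨i, hi, ha⟩ := mem_sup.1 ha
    obtain ⟨j, hj, hb⟩ := mem_sup.1 hb
    exact hcompat i hi j hj a ha b hb hab
  · obtain ⟨i, hi, h₀⟩ := mem_sup.1 h₀
    obtain ⟨j, hj, h₁⟩ := mem_sup.1 h₁
    obtain ⟨k, hk, h₂⟩ := mem_sup.1 h₂
    obtain ⟨t, ht, d₀, d₁, d₂⟩ := hcover y₀ y₁ y₂ he i hi j hj k hk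
      (mem_image_of_mem _ h₀) (mem_image_of_mem _ h₁) (mem_image_of_mem _ h₂)
    exact (hp t ht).2 y₀ y₁ y₂ n h₀₁ h₀₂ h₁₂ he
      ⟨mem_of_mem_dom ht hi h₀ d₀, mem_of_mem_dom ht hj h₁ d₁, mem_of_mem_dom ht hk h₂ d₂⟩

theorem ramseyCentered_condsOfShape {d : ℕ}
    (hd : ∀ a b, (link Γ a b).Finite ∧ (link Γ a b).ncard ≤ d) (k l : ℕ) :
    RamseyCentered {p | IsCond3 Γ p} (condsOfShape Γ k l) := by
  classical
  intro n
  set Δ := k * k * d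
  obtain ⟨m, hm⟩ :=
    exists_sunflower (α := X) k (2 ^ (k * l) * ((2 * Δ + 1) * (n + Δ * n * n)))
  refine ⟨m, fun p hp => ?_⟩
  set D := fun i => dom (p i)
  have hD : ∀ i, #(D i) ≤ k := fun i => card_image_le.trans (hp i).2.1.le
  obtain ⟨c, hc, G, -, hG, hcG, hGc⟩ := hm D univ (fun i _ => hD i) (by simp)
  obtain ⟨ρ, hρ⟩ := exists_le_card_filter_kernel_eq p G hc (fun i _ => (hp i).2.2) hG
  set T := {i ∈ G | (p i).filter (·.1 ∈ c) = ρ}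
  have hTG : T ⊆ G := filter_subset _ _
  have hpet : (T : Set (Fin m)).PairwiseDisjoint fun i => D i \ c :=
    pairwiseDisjoint_sdiff_of_pairwise_inter_eq (hGc.mono (coe_subset.2 hTG))
  obtain ⟨V, hVT, hV, hVpair⟩ := exists_independent_of_outdegree_le
    (fun i j => Conflict Γ c (D i) (D i) (D j)) Δ _ T
    (fun i _ => (card_filter_conflict_le hd D c _ _ T hpet).trans
      (Nat.mul_le_mul_right d (Nat.mul_le_mul (hD i) (hD i)))) hρ
  obtain ⟨U, hUV, hU, hUtriple⟩ := exists_independent_of_codegree_le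
    (fun i j k => Conflict Γ c (D i \ c) (D j \ c) (D k)) (fun _ _ _ => Conflict.swap₁₂)
    (fun _ _ _ => Conflict.swap₂₃) Δ n V
    (fun i _ j _ =>
      (card_filter_conflict_le hd D c _ _ V (hpet.subset (coe_subset.2 hVT))).trans
        (Nat.mul_le_mul_right d (Nat.mul_le_mul ((card_le_card sdiff_subset).trans (hD i))
          ((card_le_card sdiff_subset).trans (hD j)))))
    hV.ge
  have hUG : U ⊆ G := hUV.trans (hVT.trans hTG)
  refine ⟨U, hU, U.sup p, ?_, fun i hi => le_sup (f := p) hi⟩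
  refine isCond3_sup U p (fun i _ => (hp i).1)
    (compatible_of_filter_kernel_eq U p c ρ (fun i _ => (hp i).1) (hGc.mono (coe_subset.2 hUG))
      fun i hi => (mem_filter.1 (hVT (hUV hi))).2)
    fun _ _ _ he _ hi _ hj _ hk => exists_common_mem_of_not_conflict D c U
      (fun i hi => hcG i (hUG hi)) (fun i hi j hj => hVpair i (hUV hi) j (hUV hj)) hUtriple
      he hi hj hk

end Conditions

theorem stmt10_general (Γ : Set (Finset X)) (d : ℕ)
    (hd : ∀ x₀ x₁ : X, {x₂ | ({x₀, x₁, x₂} : Finset X) ∈ Γ}.Finite ∧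
      {x₂ | ({x₀, x₁, x₂} : Finset X) ∈ Γ}.ncard ≤ d) :
    ∃ A : ℕ → Set (Finset (X × ℕ)),
      (⋃ k, A k) = {p | IsCond3 Γ p} ∧
      ∀ k, A k ⊆ {p | IsCond3 Γ p} ∧ RamseyCentered {p | IsCond3 Γ p} (A k) := by
  refine ⟨fun i => condsOfShape Γ i.unpair.1 i.unpair.2, ?_,
    fun i => ⟨fun p hp => hp.1, ramseyCentered_condsOfShape hd _ _⟩⟩
  refine Set.Subset.antisymm (Set.iUnion_subset fun i p hp => hp.1) fun p hp => ?_
  exact Set.mem_iUnion.2 ⟨Nat.pair #p (p.sup Prod.snd + 1), by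
    simpa only [Nat.unpair_pair] using mem_condsOfShape_card_sup hp⟩

/-- If `Γ` is a 3-uniform hypergraph in which any two points have at most `d` common
completions to a hyperedge, then the finite approximation coloring poset `R(Γ)` is a
countable union of Ramsey-centered sets. -/
theorem stmt10 (Γ : Set (Finset X)) (hΓ : ∀ e ∈ Γ, e.card = 3) (d : ℕ)
    (hd : ∀ x₀ x₁ : X, {x₂ | ({x₀, x₁, x₂} : Finset X) ∈ Γ}.Finite ∧
      {x₂ | ({x₀, x₁, x₂} : Finset X) ∈ Γ}.ncard ≤ d) :
    ∃ A : ℕ → Set (Finset (X × ℕ)),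
      (⋃ k, A k) = {p | IsCond3 Γ p} ∧
      ∀ k, A k ⊆ {p | IsCond3 Γ p} ∧ RamseyCentered {p | IsCond3 Γ p} (A k) :=
  stmt10_general Γ d hd
end

section
/- Let X be a set and Γ a graph on X such that every vertex has finite degree. Then the poset R(Γ) of finite partial proper Γ-colorings p : X ⇀ ℕ ordered by reverse inclusion is a countable union of Ramsey-centered sets, witnessed by the sets A_{k,l,d} of conditions with domain of size k, range in {0,...,l-1}, and every point of the domain having at most d neighbors. -/
/-!
All conditions in `A_{k,l,d}` have exactly `k` elements, so by the Erdős–Rado lemma many distinct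
ones contain a large sunflower. Inside a sunflower, `p` can clash with `q` only at a point of the
petal `q \ p` lying at or next to the domain of `p` with colour below `l`; there are at most
`k (d + 1) l` such points and the petals are disjoint, so every `p` clashes with at most
`k (d + 1) l` others. A greedy independent set of the clash graph then consists of pairwise
compatible conditions, and their union is a common lower bound.
-/

variable {X : Type*} [DecidableEq X]

/-- A condition of the finite approximation coloring poset `R(Γ)` for a graph `G`:
a finite partial function into ℕ which is a proper partial coloring of `G`. -/
def IsCondG (G : X → X → Prop) (p : Finset (X × ℕ)) : Prop :=
  (∀ a ∈ p, ∀ b ∈ p, Prod.fst a = Prod.fst b → a = b) ∧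
  ∀ x y : X, ∀ n : ℕ, G x y → ¬((x, n) ∈ p ∧ (y, n) ∈ p)

/-- The set `A_{k,l,d}` of conditions with domain of size `k`, range in `{0,…,l-1}`,
and every point of the domain having at most `d` neighbors. -/
def Akld (G : X → X → Prop) (k l d : ℕ) : Set (Finset (X × ℕ)) :=
  {p | IsCondG G p ∧ (p.image Prod.fst).card = k ∧ (∀ a ∈ p, Prod.snd a < l) ∧
    ∀ a ∈ p, {y | G (Prod.fst a) y}.ncard ≤ d}

open Finset
open scoped Nat

section Sunflower

variable {α : Type*} [DecidableEq α]

def IsSunflower (D : Finset (Finset α)) (C : Finset α) : Prop :=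
  (D : Set (Finset α)).Pairwise fun s t => s ∩ t = C

theorem IsSunflower.image_insert {D : Finset (Finset α)} {C : Finset α} (h : IsSunflower D C)
    (y : α) : IsSunflower (D.image (insert y)) (insert y C) := by
  rintro _ hs' _ ht' hst
  obtain ⟨s, hs, rfl⟩ := mem_image.mp hs'
  obtain ⟨t, ht, rfl⟩ := mem_image.mp ht'
  rw [← insert_inter_distrib, h hs ht fun e => hst (congrArg (insert y) e)]

open Classical in
/-- A maximal pairwise disjoint subfamily either is large or its union meets every nonempty
member of the family. -/
theorem exists_isSunflower_empty_or_exists_hitting (S : Finset (Finset α)) {k : ℕ}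
    (hS : ∀ s ∈ S, #s ≤ k) (N : ℕ) :
    (∃ D ⊆ S, #D = N ∧ IsSunflower D ∅) ∨
      ∃ Y : Finset α, #Y ≤ (N - 1) * k ∧ ∀ s ∈ S, s.Nonempty → (s ∩ Y).Nonempty := by
  set P := S.powerset.filter fun D : Finset (Finset α) => (D : Set (Finset α)).PairwiseDisjoint id
  obtain ⟨M, hM, hmax⟩ := P.exists_max_image card ⟨∅, by simp [P]⟩
  rw [mem_filter, mem_powerset] at hM
  by_cases hN : N ≤ #M
  · obtain ⟨D, hDM, rfl⟩ := exists_subset_card_eq hN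
    exact .inl ⟨D, hDM.trans hM.1, rfl, fun s hs t ht hst =>
      disjoint_iff_inter_eq_empty.mp (hM.2 (hDM hs) (hDM ht) hst)⟩
  refine .inr ⟨M.biUnion id, (card_biUnion_le_card_mul M id k fun s hs => hS s (hM.1 hs)).trans
    (Nat.mul_le_mul_right k (by omega)), fun s hs hne => ?_⟩
  by_contra hdisj
  rw [not_nonempty_iff_eq_empty, ← disjoint_iff_inter_eq_empty, disjoint_biUnion_right] at hdisj
  have hsM : s ∉ M := fun hsM => hne.ne_empty (disjoint_self.mp (hdisj s hsM))
  have hins : insert s M ∈ P := by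
    rw [mem_filter, mem_powerset, coe_insert]
    exact ⟨insert_subset hs hM.1, hM.2.insert fun t ht _ => hdisj t ht⟩
  have := hmax _ hins
  rw [card_insert_of_notMem hsM] at this
  omega

theorem exists_lt_card_filter_mem_of_mul_lt_card {S : Finset (Finset α)} {Y : Finset α} {b : ℕ}
    (hY : ∀ s ∈ S, (s ∩ Y).Nonempty) (h : #Y * b < #S) : ∃ y ∈ Y, b < #{s ∈ S | y ∈ s} := by
  by_contra! hle
  have hcover : S ⊆ Y.biUnion fun y => {s ∈ S | y ∈ s} := fun s hs => by
    obtain ⟨y, hy⟩ := hY s hs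
    rw [mem_inter] at hy
    exact mem_biUnion.mpr ⟨y, hy.2, mem_filter.mpr ⟨hs, hy.1⟩⟩
  exact ((card_le_card hcover).trans (card_biUnion_le_card_mul _ _ _ hle)).not_gt h

/-- The Erdős–Rado sunflower lemma. -/
theorem exists_isSunflower_of_factorial_mul_pow_lt_card (N : ℕ) :
    ∀ (k : ℕ) (S : Finset (Finset α)), (∀ s ∈ S, #s = k) → k ! * (N - 1) ^ k < #S →
      ∃ D ⊆ S, #D = N ∧ ∃ C, IsSunflower D C
  | 0, S, hS, hcard => by
    have : S ⊆ {∅} := fun s hs => mem_singleton.mpr (card_eq_zero.mp (hS s hs))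
    have := card_le_card this
    simp only [Nat.factorial_zero, pow_zero, mul_one, card_singleton] at hcard this
    omega
  | k + 1, S, hS, hcard => by
    obtain ⟨D, hDS, hD, hsun⟩ | ⟨Y, hY, hhit⟩ :=
      exists_isSunflower_empty_or_exists_hitting S (fun s hs => (hS s hs).le) N
    · exact ⟨D, hDS, hD, ∅, hsun⟩
    have hpigeon : #Y * (k ! * (N - 1) ^ k) < #S := calc
      #Y * (k ! * (N - 1) ^ k) ≤ (N - 1) * (k + 1) * (k ! * (N - 1) ^ k) := by gcongr
      _ = (k + 1)! * (N - 1) ^ (k + 1) := by rw [Nat.factorial_succ]; ring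
      _ < #S := hcard
    obtain ⟨y, -, hy⟩ := exists_lt_card_filter_mem_of_mul_lt_card
      (fun s hs => hhit s hs (card_pos.mp (by rw [hS s hs]; omega))) hpigeon
    set T := {s ∈ S | y ∈ s}
    have hyT : ∀ s ∈ T, y ∈ s := fun s hs => (mem_filter.mp hs).2
    have hinj : Set.InjOn (fun s : Finset α => s.erase y) T := fun s hs t ht hst => by
      rw [← insert_erase (hyT s hs), ← insert_erase (hyT t ht)]
      exact congrArg (insert y) hst
    obtain ⟨D, hDT, hD, C, hC⟩ := exists_isSunflower_of_factorial_mul_pow_lt_card N k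
      (T.image fun s : Finset α => s.erase y)
      (by
        simp only [mem_image]
        rintro _ ⟨s, hs, rfl⟩
        rw [card_erase_of_mem (hyT s hs), hS s (mem_filter.mp hs).1, add_tsub_cancel_right])
      (by rwa [card_image_of_injOn hinj])
    have hyD : ∀ s ∈ D, y ∉ s := fun s hs => by
      obtain ⟨t, -, rfl⟩ := mem_image.mp (hDT hs)
      exact notMem_erase y t
    refine ⟨D.image (insert y), fun s hs => ?_, ?_, insert y C, hC.image_insert y⟩
    · obtain ⟨s', hs', rfl⟩ := mem_image.mp hs
      obtain ⟨t, ht, rfl⟩ := mem_image.mp (hDT hs')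
      rw [insert_erase (hyT t ht)]
      exact (mem_filter.mp ht).1
    · rw [card_image_of_injOn fun s hs t ht hst => by
        rw [← erase_insert (hyD s hs), ← erase_insert (hyD t ht)]
        exact congrArg (erase · y) hst, hD]

end Sunflower

/-- Greedy choice: keep a vertex, discard its at most `Δ` neighbours, repeat. -/
theorem SimpleGraph.exists_isIndepSet_card_eq_of_card_filter_adj_le {β : Type*}
    [DecidableEq β] (G : SimpleGraph β) [DecidableRel G.Adj] {Δ : ℕ} :
    ∀ (t : ℕ) (D : Finset β), (∀ p ∈ D, #{q ∈ D | G.Adj p q} ≤ Δ) → t * (Δ + 1) ≤ #D →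
      ∃ I ⊆ D, #I = t ∧ G.IsIndepSet I
  | 0, _, _, _ => ⟨∅, empty_subset _, card_empty, by simp [SimpleGraph.IsIndepSet]⟩
  | t + 1, D, hdeg, hcard => by
    obtain ⟨p, hp⟩ : D.Nonempty := card_pos.mp (by nlinarith)
    set D' := D \ insert p {q ∈ D | G.Adj p q}
    have hD'D : D' ⊆ D := sdiff_subset
    have hcard' : t * (Δ + 1) ≤ #D' := by
      have := (card_insert_le p {q ∈ D | G.Adj p q}).trans (Nat.add_le_add_right (hdeg p hp) 1)
      have := card_le_card_sdiff_add_card (s := D) (t := insert p {q ∈ D | G.Adj p q})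
      nlinarith
    obtain ⟨I, hID', hI, hindep⟩ := exists_isIndepSet_card_eq_of_card_filter_adj_le G t D'
      (fun q hq => (card_le_card (filter_subset_filter _ hD'D)).trans (hdeg q (hD'D hq))) hcard'
    have hpI : p ∉ I := fun h => (mem_sdiff.mp (hID' h)).2 (mem_insert_self p _)
    refine ⟨insert p I, insert_subset hp (hID'.trans hD'D), by rw [card_insert_of_notMem hpI, hI],
      ?_⟩
    have hnadj : ∀ q ∈ I, ¬ G.Adj p q := fun q hq hpq =>
      (mem_sdiff.mp (hID' hq)).2 (mem_insert_of_mem (mem_filter.mpr ⟨hD'D (hID' hq), hpq⟩))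
    rw [SimpleGraph.IsIndepSet, coe_insert, Set.pairwise_insert]
    exact ⟨hindep, fun q hq _ => ⟨hnadj q hq, fun hqp => hnadj q hq hqp.symm⟩⟩

section Coloring

variable {G : X → X → Prop}

theorem IsCondG.card_image_fst {p : Finset (X × ℕ)} (hp : IsCondG G p) :
    #(p.image Prod.fst) = #p :=
  card_image_of_injOn fun a ha b hb hab => hp.1 a ha b hb hab

theorem exists_mem_Akld {p : Finset (X × ℕ)} (hp : IsCondG G p) : ∃ k l d, p ∈ Akld G k l d :=
  ⟨_, p.sup Prod.snd + 1, p.sup fun a => {y | G a.1 y}.ncard, hp, rfl,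
    fun _ ha => Nat.lt_succ_of_le (le_sup ha),
    fun _ ha => le_sup (f := fun a => {y | G a.1 y}.ncard) ha⟩

theorem isCondG_sup_id {I : Finset (Finset (X × ℕ))}
    (h : ∀ p ∈ I, ∀ q ∈ I, IsCondG G (p ∪ q)) : IsCondG G (I.sup id) := by
  constructor
  · intro a ha b hb hab
    obtain ⟨p, hp, hap⟩ := mem_sup.mp ha
    obtain ⟨q, hq, hbq⟩ := mem_sup.mp hb
    exact (h p hp q hq).1 a (mem_union_left _ hap) b (mem_union_right _ hbq) hab
  · rintro x y c hG ⟨hx, hy⟩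
    obtain ⟨p, hp, hxp⟩ := mem_sup.mp hx
    obtain ⟨q, hq, hyq⟩ := mem_sup.mp hy
    exact (h p hp q hq).2 x y c hG ⟨mem_union_left _ hxp, mem_union_right _ hyq⟩

theorem exists_mem_sdiff_of_not_isCondG_union (hsym : ∀ x y, G x y → G y x)
    {p q : Finset (X × ℕ)} (hp : IsCondG G p) (hq : IsCondG G q) (h : ¬ IsCondG G (p ∪ q)) :
    ∃ a ∈ q \ p, ∃ b ∈ p, b.1 = a.1 ∨ G b.1 a.1 := by
  rw [IsCondG, not_and_or] at h
  push Not at h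
  rcases h with ⟨a, ha, b, hb, hab, hne⟩ | ⟨x, y, c, hG, hx, hy⟩
  · rcases mem_union.mp ha with hap | haq <;> rcases mem_union.mp hb with hbp | hbq
    · exact absurd (hp.1 a hap b hbp hab) hne
    · exact ⟨b, mem_sdiff.mpr ⟨hbq, fun hbp => hne (hp.1 a hap b hbp hab)⟩, a, hap, .inl hab⟩
    · exact ⟨a, mem_sdiff.mpr ⟨haq, fun hap => hne (hp.1 a hap b hbp hab)⟩, b, hbp,
        .inl hab.symm⟩
    · exact absurd (hq.1 a haq b hbq hab) hne
  · rcases mem_union.mp hx with hxp | hxq <;> rcases mem_union.mp hy with hyp | hyq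
    · exact absurd ⟨hxp, hyp⟩ (hp.2 x y c hG)
    · exact ⟨(y, c), mem_sdiff.mpr ⟨hyq, fun hyp => hp.2 x y c hG ⟨hxp, hyp⟩⟩, (x, c), hxp,
        .inr hG⟩
    · exact ⟨(x, c), mem_sdiff.mpr ⟨hxq, fun hxp => hp.2 x y c hG ⟨hxp, hyp⟩⟩, (y, c), hyp,
        .inr (hsym x y hG)⟩
    · exact absurd ⟨hxq, hyq⟩ (hq.2 x y c hG)

variable (G) in
def incompatibilityGraph : SimpleGraph (Finset (X × ℕ)) where
  Adj p q := p ≠ q ∧ ¬ IsCondG G (p ∪ q)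
  symm := ⟨fun p q h => ⟨h.1.symm, by rw [union_comm]; exact h.2⟩⟩
  loopless := ⟨fun p h => h.1 rfl⟩

theorem card_filter_incompatibilityGraph_adj_le [DecidableRel (incompatibilityGraph G).Adj]
    (hsym : ∀ x y, G x y → G y x) (hlf : ∀ x, {y | G x y}.Finite) {k l d : ℕ}
    {D : Finset (Finset (X × ℕ))} {C : Finset (X × ℕ)} (hD : IsSunflower D C)
    (hDA : ∀ q ∈ D, q ∈ Akld G k l d) {p : Finset (X × ℕ)} (hp : p ∈ D) :
    #{q ∈ D | (incompatibilityGraph G).Adj p q} ≤ k * (d + 1) * l := by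
  set F := {q ∈ D | (incompatibilityGraph G).Adj p q}
  have hpA := hDA p hp
  set W : Finset (X × ℕ) := p.biUnion (fun b => insert b.1 (hlf b.1).toFinset) ×ˢ range l
  have hW : #W ≤ k * (d + 1) * l := by
    rw [card_product, card_range]
    refine Nat.mul_le_mul_right l
      ((card_biUnion_le_card_mul _ _ (d + 1) fun b hb => ?_).trans ?_)
    · refine (card_insert_le _ _).trans (Nat.add_le_add_right ?_ 1)
      rw [← Set.ncard_eq_toFinset_card _ (hlf b.1)]
      exact hpA.2.2.2 b hb
    · rw [← hpA.1.card_image_fst, hpA.2.1]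
  have hpetal : ∀ q ∈ F, ((q \ p) ∩ W).Nonempty := fun q hq => by
    obtain ⟨hqD, -, hpq⟩ := mem_filter.mp hq
    have hqA := hDA q hqD
    obtain ⟨a, ha, b, hb, hab⟩ := exists_mem_sdiff_of_not_isCondG_union hsym hpA.1 hqA.1 hpq
    refine ⟨a, mem_inter.mpr ⟨ha, mem_product.mpr ⟨mem_biUnion.mpr ⟨b, hb, ?_⟩,
      mem_range.mpr (hqA.2.2.1 a (mem_sdiff.mp ha).1)⟩⟩⟩
    rcases hab with hab | hab
    · exact mem_insert.mpr (.inl hab.symm)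
    · exact mem_insert_of_mem ((hlf b.1).mem_toFinset.mpr hab)
  have hdisj : (F : Set (Finset (X × ℕ))).PairwiseDisjoint fun q => (q \ p) ∩ W := by
    intro q hq q' hq' hqq'
    obtain ⟨hqD, hpq, -⟩ := mem_filter.mp hq
    obtain ⟨hq'D, -, -⟩ := mem_filter.mp hq'
    refine disjoint_left.mpr fun a ha ha' => ?_
    rw [mem_inter, mem_sdiff] at ha ha'
    obtain ⟨⟨haq, hap⟩, -⟩ := ha
    obtain ⟨⟨haq', -⟩, -⟩ := ha'
    have hC : a ∈ p ∩ q := by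
      rw [hD hp hqD hpq, ← hD hqD hq'D hqq']
      exact mem_inter.mpr ⟨haq, haq'⟩
    exact hap (mem_inter.mp hC).1
  calc #F ≤ #(F.biUnion fun q => (q \ p) ∩ W) := card_le_card_biUnion hdisj hpetal
    _ ≤ #W := card_le_card (biUnion_subset.mpr fun _ _ => inter_subset_right)
    _ ≤ k * (d + 1) * l := hW

open Classical in
theorem exists_subset_card_eq_isCondG_sup_id (hsym : ∀ x y, G x y → G y x)
    (hlf : ∀ x, {y | G x y}.Finite) {k l d n : ℕ} {S : Finset (Finset (X × ℕ))}
    (hSA : ∀ p ∈ S, p ∈ Akld G k l d) (hS : k ! * (n * (k * (d + 1) * l + 1) - 1) ^ k < #S) :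
    ∃ I ⊆ S, #I = n ∧ IsCondG G (I.sup id) := by
  obtain ⟨D, hDS, hD, C, hC⟩ := exists_isSunflower_of_factorial_mul_pow_lt_card _ k S
    (fun p hp => by rw [← (hSA p hp).1.card_image_fst, (hSA p hp).2.1]) hS
  obtain ⟨I, hID, hI, hindep⟩ :=
    (incompatibilityGraph G).exists_isIndepSet_card_eq_of_card_filter_adj_le n D
      (fun p hp => card_filter_incompatibilityGraph_adj_le hsym hlf hC
        (fun q hq => hSA q (hDS hq)) hp) hD.ge
  refine ⟨I, hID.trans hDS, hI, isCondG_sup_id fun p hp q hq => ?_⟩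
  by_cases hpq : p = q
  · rw [← hpq, union_self]
    exact (hSA p (hDS (hID hp))).1
  · by_contra h
    exact hindep hp hq hpq ⟨hpq, h⟩

/-- Repetitions in a sequence are harmless: a value repeated `n` times is its own lower bound. -/
theorem ramseyCentered_of_forall_exists_card_lt {Cond A : Set (Finset (X × ℕ))} (hA : A ⊆ Cond)
    (h : ∀ n, ∃ B, ∀ S : Finset (Finset (X × ℕ)), (∀ p ∈ S, p ∈ A) → B < #S →
      ∃ I ⊆ S, #I = n ∧ ∃ r ∈ Cond, ∀ p ∈ I, p ⊆ r) :
    RamseyCentered Cond A := by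
  intro n
  obtain ⟨B, hB⟩ := h n
  refine ⟨(n - 1) * B + 1, fun f hf => ?_⟩
  by_cases himage : B < #(univ.image f)
  · obtain ⟨I, hI, hIn, r, hr, hIr⟩ := hB _ (by simpa using hf) himage
    have hsurj : n ≤ #{i | f i ∈ I} := hIn.ge.trans <| card_le_card_of_surjOn f fun p hp => by
      obtain ⟨i, -, rfl⟩ := mem_image.mp (hI hp)
      exact ⟨i, by simpa using hp, rfl⟩
    obtain ⟨b, hb, hbn⟩ := exists_subset_card_eq hsurj
    exact ⟨b, hbn, r, hr, fun i hi => hIr _ (mem_filter.mp (hb hi)).2⟩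
  · obtain ⟨p, -, hp⟩ := exists_lt_card_fiber_of_mul_lt_card_of_maps_to (s := univ) (n := n - 1)
      (fun i _ => mem_image_of_mem f (mem_univ i)) (by
        rw [Finset.card_univ, Fintype.card_fin]
        have := Nat.mul_le_mul_right (n - 1) (not_lt.mp himage)
        nlinarith)
    obtain ⟨i₀, hi₀⟩ := card_pos.mp (by omega : 0 < #{i ∈ univ | f i = p})
    obtain ⟨b, hb, hbn⟩ := exists_subset_card_eq (by omega : n ≤ #{i ∈ univ | f i = p})
    refine ⟨b, hbn, p, (mem_filter.mp hi₀).2 ▸ hA (hf i₀), fun i hi => ?_⟩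
    rw [(mem_filter.mp (hb hi)).2]

end Coloring

theorem stmt11_general (G : X → X → Prop) (hsym : ∀ x y, G x y → G y x)
    (hlf : ∀ x, {y | G x y}.Finite) :
    (∀ p : Finset (X × ℕ), IsCondG G p → ∃ k l d, p ∈ Akld G k l d) ∧
    ∀ k l d, RamseyCentered {p | IsCondG G p} (Akld G k l d) := by
  refine ⟨fun _ hp => exists_mem_Akld hp, fun k l d => ?_⟩
  refine ramseyCentered_of_forall_exists_card_lt (fun _ hp => hp.1) fun n => ?_
  refine ⟨k ! * (n * (k * (d + 1) * l + 1) - 1) ^ k, fun S hSA hS => ?_⟩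
  obtain ⟨I, hIS, hI, hsup⟩ := exists_subset_card_eq_isCondG_sup_id hsym hlf hSA hS
  exact ⟨I, hIS, hI, I.sup id, hsup, fun p hp => le_sup (f := id) hp⟩

/-- For a locally finite graph `G`, the finite approximation coloring poset is a
countable union of Ramsey-centered sets, witnessed by the sets `A_{k,l,d}`. -/
theorem stmt11 (G : X → X → Prop) (hsym : ∀ x y, G x y → G y x)
    (hirr : ∀ x, ¬ G x x) (hlf : ∀ x, {y | G x y}.Finite) :
    (∀ p : Finset (X × ℕ), IsCondG G p → ∃ k l d, p ∈ Akld G k l d) ∧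
    ∀ k l d, RamseyCentered {p | IsCondG G p} (Akld G k l d) :=
  stmt11_general G hsym hlf
end

section
/- For every n ≥ 2 and every m ∈ ℕ there exists a finite interval I of natural numbers such that for every partition of the set of functions n^I into m pieces, one of the pieces contains a combinatorial line. -/
namespace Combinatorics.Line

variable {α ι ι' κ : Type*}

def reindex (l : Line α ι) (e : ι ≃ ι') : Line α ι' where
  idxFun i := l.idxFun (e.symm i)
  proper := ⟨e l.proper.choose, by simpa using l.proper.choose_spec⟩

lemma IsMono.reindex {l : Line α ι} {C : (ι' → α) → κ} (e : ι ≃ ι')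
    (h : l.IsMono fun v => C (v ∘ e.symm)) : (l.reindex e).IsMono C :=
  h

lemma exists_mono_of_card_eq (α κ : Type*) [Finite α] [Nonempty α] [Finite κ] :
    ∃ N, 0 < N ∧ ∀ (ι : Type*) [Fintype ι], Fintype.card ι = N →
      ∀ C : (ι → α) → κ, ∃ l : Line α ι, l.IsMono C := by
  obtain ⟨ι₀, _, hι₀⟩ := exists_mono_in_high_dimension α κ
  cases isEmpty_or_nonempty κ with
  | inl _ => exact ⟨1, one_pos, fun _ _ _ C => isEmptyElim (C fun _ => Classical.arbitrary α)⟩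
  | inr _ =>
    -- a line for the constant colouring witnesses that `ι₀` is nonempty
    obtain ⟨l₀, -⟩ := hι₀ fun _ => Classical.arbitrary κ
    refine ⟨Fintype.card ι₀, Fintype.card_pos_iff.2 ⟨l₀.proper.choose⟩, fun ι _ hcard C => ?_⟩
    let e : ι₀ ≃ ι := Fintype.equivOfCardEq hcard.symm
    obtain ⟨l, hl⟩ := hι₀ fun v => C (v ∘ e.symm)
    exact ⟨l.reindex e, hl.reindex e⟩

lemma exists_active_finset [Fintype ι] (l : Line α ι) :
    ∃ s : Finset ι, s.Nonempty ∧ (∀ x, ∀ i ∈ s, l x i = x) ∧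
      ∀ x x' i, i ∉ s → l x i = l x' i := by
  classical
  refine ⟨Finset.univ.filter fun i => l.idxFun i = none, ?_, ?_, ?_⟩
  · obtain ⟨i, hi⟩ := l.proper
    exact ⟨i, by simpa using hi⟩
  · intro x i hi
    exact l.apply_none x i (Finset.mem_filter.1 hi).2
  · intro x x' i hi
    obtain ⟨a, ha⟩ := Option.ne_none_iff_exists'.1 (by simpa using hi)
    rw [l.apply_some ha, l.apply_some ha]

end Combinatorics.Line

open Combinatorics

/-- Finitary Hales–Jewett theorem on intervals: for every `n ≥ 2` and every number `m`
of pieces there is a finite interval `I = [a, b)` of natural numbers such that every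
partition of `n^I` into `m` pieces has a piece containing a combinatorial line. -/
theorem stmt13 (n m : ℕ) (hn : 2 ≤ n) :
    ∃ a b : ℕ, a < b ∧
      ∀ part : (((Finset.Ico a b : Finset ℕ) : Type) → Fin n) → Fin m,
        ∃ (y : Fin n → ((Finset.Ico a b : Finset ℕ) : Type) → Fin n)
          (s : Finset ((Finset.Ico a b : Finset ℕ) : Type)),
          s.Nonempty ∧
          (∀ j : Fin n, ∀ i ∈ s, y j i = j) ∧
          (∀ j j' : Fin n, ∀ i, i ∉ s → y j i = y j' i) ∧
          ∃ c : Fin m, ∀ j : Fin n, part (y j) = c := by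
  have : Nonempty (Fin n) := ⟨⟨0, by omega⟩⟩
  obtain ⟨N, hN, hHJ⟩ := Line.exists_mono_of_card_eq (Fin n) (Fin m)
  refine ⟨0, N, hN, fun part => ?_⟩
  obtain ⟨l, c, hc⟩ := hHJ _ (by simp) part
  obtain ⟨s, hs, hactive, hfixed⟩ := l.exists_active_finset
  exact ⟨l, s, hs, hactive, hfixed, c, hc⟩
end

section
/- (ZFC) If there is a function c : ℝ² → ℕ such that no 'rectangle' {r, r'} × {s, s'} (with r ≠ r' and s ≠ s') is c-monochromatic, then the Continuum Hypothesis holds. -/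
/-!
If `ℵ₁ < 𝔠`, fix a set `S ⊆ ℝ` of size `ℵ₁`. For every column `r`, the colouring `s ↦ c s r`
of `S` by countably many colours has a collision: `s ≠ s'` with `c s r = c s' r = n`. Sending
`r` to such a triple `(s, s', n)` is injective when no rectangle is monochromatic, so
`𝔠 ≤ #(S × S × ℕ) = ℵ₁`, a contradiction.
-/

open Cardinal

universe u

theorem Cardinal.exists_ne_map_eq_of_mk_lt {α γ : Type u} (f : α → γ) (h : #γ < #α) :
    ∃ a a', a ≠ a' ∧ f a = f a' := by
  have hf : ¬ Function.Injective f := fun hf => (mk_le_of_injective hf).not_gt h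
  obtain ⟨a, a', hfa, hne⟩ := Function.not_injective_iff.mp hf
  exact ⟨a, a', hne, hfa⟩

theorem exists_monochromatic_rectangle {α β γ : Type u} (c : α → β → γ) (hβ : ℵ₀ ≤ #β)
    (hγα : #γ < #α) (hαβ : #α < #β) :
    ∃ a a' b b', a ≠ a' ∧ b ≠ b' ∧ c a b = c a b' ∧ c a b' = c a' b ∧ c a' b = c a' b' := by
  by_contra! hc
  have hcollision : ∀ b, ∃ a a', a ≠ a' ∧ c a b = c a' b := fun b =>
    exists_ne_map_eq_of_mk_lt (c · b) hγα
  choose a a' hne hcol using hcollision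
  have hinj : Function.Injective fun b => (a b, a' b, c (a b) b) := by
    intro b₁ b₂ h
    simp only [Prod.mk.injEq] at h
    obtain ⟨ha, ha', hcb⟩ := h
    rw [← ha] at hcb
    have hcol₂ : c (a b₁) b₂ = c (a' b₁) b₂ := by rw [ha, ha', hcol]
    by_contra hb
    exact hc (a b₁) (a' b₁) b₁ b₂ (hne b₁) hb hcb (hcb.symm.trans (hcol b₁))
      ((hcol b₁).symm.trans (hcb.trans hcol₂))
  have hprod : #(α × α × γ) < #β := by
    simp only [mk_prod, lift_id]
    exact mul_lt_of_lt hβ hαβ (mul_lt_of_lt hβ hαβ (hγα.trans hαβ))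
  exact (mk_le_of_injective hinj).not_gt hprod

/-- (ZFC) If there is a coloring `c : ℝ² → ℕ` with no monochromatic rectangle
`{r, r'} × {s, s'}` (with `r ≠ r'`, `s ≠ s'`), then the Continuum Hypothesis holds. -/
theorem stmt15 (c : ℝ → ℝ → ℕ)
    (hc : ∀ r r' s s' : ℝ, r ≠ r' → s ≠ s' →
      ¬(c r s = c r s' ∧ c r s' = c r' s ∧ c r' s = c r' s')) :
    Cardinal.continuum = Cardinal.aleph 1 := by
  -- `ℝ` lives in `Type`, so argue in `Cardinal.{0}` and lift.
  suffices h : 𝔠 = ℵ₁ by simpa using congrArg lift.{_, 0} h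
  by_contra hne
  have hlt : ℵ₁ < #ℝ := mk_real ▸ aleph_one_le_continuum.lt_of_ne (Ne.symm hne)
  obtain ⟨S, hS⟩ := le_mk_iff_exists_set.mp hlt.le
  obtain ⟨s, s', r, r', hs, hr, hmono⟩ :=
    exists_monochromatic_rectangle (fun (s : S) r => c s r) (mk_real ▸ aleph0_le_continuum)
      (by rw [hS, mk_nat]; exact aleph0_lt_aleph_one) (hS ▸ hlt)
  exact hc s s' r r' (Subtype.coe_ne_coe.mpr hs) hr hmono
end
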